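/- Let γ = (1 2 ... p) be the full cycle in S_p and let k ≥ 1. Consider permutations β₁,...,β_k ∈ S_p and the quantity L = |β₁| + |β₁⁻¹β₂| + |β₂⁻¹β₃| + ... + |β_{k−1}⁻¹β_k| + |β_k⁻¹γ|. Then L ≥ p−1, with equality if and only if each β_i lies on the geodesic from id to γ (i.e. |β_i| + |β_i⁻¹γ| = p−1 for each i) and the associated non-crossing partitions satisfy [β₁] ≤ [β₂] ≤ ... ≤ [β_k] in the refinement order. -/

import Mathlib

open Equiv Finset MeasureTheory

/-- A finpartition of `Fin n` is non-crossing if there are no `a < b < c < d` with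
`a, c` in one block and `b, d` in another, distinct block. -/
def IsNonCrossing {n : ℕ} (P : Finpartition (Finset.univ : Finset (Fin n))) : Prop :=
  ¬ ∃ (a b c d : Fin n) (X Y : Finset (Fin n)), X ∈ P.parts ∧ Y ∈ P.parts ∧ X ≠ Y ∧
      a < b ∧ b < c ∧ c < d ∧ a ∈ X ∧ c ∈ X ∧ b ∈ Y ∧ d ∈ Y

/-- The minimal number of transpositions whose product is `σ`. -/
noncomputable def permLength {n : ℕ} (σ : Equiv.Perm (Fin n)) : ℕ :=
  sInf {k | ∃ l : List (Equiv.Perm (Fin n)), (∀ τ ∈ l, τ.IsSwap) ∧ l.prod = σ ∧ l.length = k}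

/-- The number of cycles of `σ`, counting fixed points as cycles (= number of orbits). -/
def cycleCount {n : ℕ} (σ : Equiv.Perm (Fin n)) : ℕ :=
  Multiset.card σ.cycleType + (n - σ.support.card)

/-- The setoid on `Fin n` whose classes are the orbits (cycles) of `σ`. -/
def sameCycleSetoid {n : ℕ} (σ : Equiv.Perm (Fin n)) : Setoid (Fin n) :=
  ⟨σ.SameCycle, ⟨Equiv.Perm.SameCycle.refl σ, fun h => h.symm, fun h h' => h.trans h'⟩⟩

instance {n : ℕ} (σ : Equiv.Perm (Fin n)) : DecidableRel ⇑(sameCycleSetoid σ) :=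
  fun a b => (inferInstance : Decidable (σ.SameCycle a b))

/-- The partition of `Fin n` into orbits of `σ`. -/
def orbitPartition {n : ℕ} (σ : Equiv.Perm (Fin n)) :
    Finpartition (Finset.univ : Finset (Fin n)) :=
  Finpartition.ofSetoid (sameCycleSetoid σ)


namespace NCGeo

theorem _root_.Equiv.Perm.apply_inv_self {α : Type*} (f : Equiv.Perm α) (x : α) : f (f⁻¹ x) = x :=
  Equiv.apply_symm_apply f x

theorem _root_.Equiv.Perm.inv_apply_self {α : Type*} (f : Equiv.Perm α) (x : α) : f⁻¹ (f x) = x :=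
  Equiv.symm_apply_apply f x

theorem _root_.Equiv.Perm.sameCycle_inv_apply_left {α : Type*} {f : Equiv.Perm α} {x y : α} :
    f.SameCycle (f⁻¹ x) y ↔ f.SameCycle x y :=
  Equiv.Perm.sameCycle_symm_apply_left

theorem _root_.Equiv.Perm.sameCycle_inv_apply_right {α : Type*} {f : Equiv.Perm α} {x y : α} :
    f.SameCycle x (f⁻¹ y) ↔ f.SameCycle x y :=
  Equiv.Perm.sameCycle_symm_apply_right

open Equiv.Perm

variable {p : ℕ}

/-- orbit of `x` under `σ` as a finset. -/
def orbitF (σ : Equiv.Perm (Fin p)) (x : Fin p) : Finset (Fin p) :=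
  univ.filter (σ.SameCycle x ·)

/-- set of minima of orbits. -/
def Mins (σ : Equiv.Perm (Fin p)) : Finset (Fin p) :=
  univ.filter (fun x => ∀ y, σ.SameCycle x y → x ≤ y)

/-- number of orbits of `σ`, as number of orbit minima. -/
def myC (σ : Equiv.Perm (Fin p)) : ℕ := (Mins σ).card

lemma mem_orbitF {σ : Equiv.Perm (Fin p)} {x y : Fin p} :
    y ∈ orbitF σ x ↔ σ.SameCycle x y := by simp [orbitF]

lemma mem_Mins {σ : Equiv.Perm (Fin p)} {x : Fin p} :
    x ∈ Mins σ ↔ ∀ y, σ.SameCycle x y → x ≤ y := by simp [Mins]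

lemma sameCycle_nat {σ : Equiv.Perm (Fin p)} {x y : Fin p} :
    σ.SameCycle x y ↔ ∃ n : ℕ, (σ ^ n) x = y := by
  constructor
  · intro h
    obtain ⟨i, _, hi⟩ := h.exists_pow_eq'
    exact ⟨i, hi⟩
  · rintro ⟨n, rfl⟩
    exact ⟨(n : ℤ), by simp⟩

lemma pow_mul_apply_fix {σ : Equiv.Perm (Fin p)} {x : Fin p} {K : ℕ} (h : (σ ^ K) x = x) (q : ℕ) :
    (σ ^ (K * q)) x = x := by
  induction q with
  | zero => simp
  | succ q ih => rw [Nat.mul_succ, pow_add, Equiv.Perm.mul_apply, h, ih]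

lemma pow_apply_mod {σ : Equiv.Perm (Fin p)} {x : Fin p} {K : ℕ} (h : (σ ^ K) x = x) (n : ℕ) :
    (σ ^ n) x = (σ ^ (n % K)) x := by
  conv_lhs => rw [← Nat.mod_add_div n K]
  rw [pow_add, Equiv.Perm.mul_apply, pow_mul_apply_fix h]

lemma sameCycle_fixed {σ : Equiv.Perm (Fin p)} {x y : Fin p} (hx : σ x = x) :
    σ.SameCycle x y ↔ y = x := by
  constructor
  · intro h; exact (h.eq_of_left hx).symm
  · rintro rfl; exact Equiv.Perm.SameCycle.refl _ _

lemma orbitF_eq_of_sameCycle {σ : Equiv.Perm (Fin p)} {x y : Fin p} (h : σ.SameCycle x y) :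
    orbitF σ x = orbitF σ y := by
  ext z; simp only [mem_orbitF]
  exact ⟨fun hz => h.symm.trans hz, fun hz => h.trans hz⟩

lemma self_mem_orbitF {σ : Equiv.Perm (Fin p)} {x : Fin p} : x ∈ orbitF σ x :=
  mem_orbitF.2 (Equiv.Perm.SameCycle.refl _ _)

lemma apply_mem_orbitF {σ : Equiv.Perm (Fin p)} {x : Fin p} : σ x ∈ orbitF σ x :=
  mem_orbitF.2 ⟨1, by simp⟩

lemma orbitF_nonempty (σ : Equiv.Perm (Fin p)) (x : Fin p) : (orbitF σ x).Nonempty :=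
  ⟨x, self_mem_orbitF⟩

/-- the minimum of the orbit of `x` is an orbit minimum. -/
lemma min'_orbitF_mem_Mins (σ : Equiv.Perm (Fin p)) (x : Fin p) :
    (orbitF σ x).min' (orbitF_nonempty σ x) ∈ Mins σ := by
  set m := (orbitF σ x).min' (orbitF_nonempty σ x) with hm
  have hmo : m ∈ orbitF σ x := Finset.min'_mem _ _
  rw [mem_Mins]
  intro y hy
  have : y ∈ orbitF σ x := by
    rw [mem_orbitF] at hmo ⊢
    exact hmo.trans hy
  exact Finset.min'_le _ _ this

lemma mem_Mins_iff_min' {σ : Equiv.Perm (Fin p)} {x : Fin p} :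
    x ∈ Mins σ ↔ x = (orbitF σ x).min' (orbitF_nonempty σ x) := by
  constructor
  · intro h
    apply le_antisymm
    · exact Finset.le_min' _ _ _ (fun y hy => (mem_Mins.1 h) y (mem_orbitF.1 hy))
    · exact Finset.min'_le _ _ self_mem_orbitF
  · intro h
    rw [h]
    exact min'_orbitF_mem_Mins σ x

lemma myC_le (σ : Equiv.Perm (Fin p)) : myC σ ≤ p := by
  simpa [myC, Mins] using (Finset.card_filter_le univ _).trans (by simp)

lemma myC_one : myC (1 : Equiv.Perm (Fin p)) = p := by
  have : Mins (1 : Equiv.Perm (Fin p)) = univ := by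
    ext x; simp only [mem_Mins, mem_univ, iff_true]
    intro y hy
    rw [Equiv.Perm.sameCycle_one] at hy
    exact hy.le
  simp [myC, this]

lemma myC_eq_p_iff {σ : Equiv.Perm (Fin p)} : myC σ = p ↔ σ = 1 := by
  constructor
  · intro h
    have : Mins σ = univ := Finset.eq_univ_of_card _ (by simpa [myC] using h)
    refine Equiv.ext fun x => ?_
    have hx : x ∈ Mins σ := this ▸ mem_univ x
    have hsx : σ x ∈ Mins σ := this ▸ mem_univ (σ x)
    have h1 : x ≤ σ x := (mem_Mins.1 hx) (σ x) ⟨1, by simp⟩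
    have h2 : σ x ≤ x := (mem_Mins.1 hsx) x ⟨-1, by simp⟩
    simpa using le_antisymm h2 h1
  · rintro rfl; exact myC_one

lemma one_le_myC (hp : 1 ≤ p) (σ : Equiv.Perm (Fin p)) : 1 ≤ myC σ := by
  have := min'_orbitF_mem_Mins σ ⟨0, hp⟩
  exact Finset.card_pos.2 ⟨_, this⟩ 

lemma myC_inv (σ : Equiv.Perm (Fin p)) : myC σ⁻¹ = myC σ := by
  unfold myC Mins
  congr 1
  ext x
  simp [Equiv.Perm.sameCycle_inv]

section Merge

variable {p : ℕ} {σ : Equiv.Perm (Fin p)} {a b : Fin p}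

lemma mul_swap_apply_left : (σ * Equiv.swap a b) a = σ b := by
  simp [Equiv.Perm.mul_apply]

lemma mul_swap_apply_right : (σ * Equiv.swap a b) b = σ a := by
  simp [Equiv.Perm.mul_apply]

lemma mul_swap_apply_other {x : Fin p} (hxa : x ≠ a) (hxb : x ≠ b) :
    (σ * Equiv.swap a b) x = σ x := by
  simp [Equiv.Perm.mul_apply, Equiv.swap_apply_of_ne_of_ne hxa hxb]

lemma pow_mul_swap_far {x : Fin p} (hxa : ¬ σ.SameCycle x a) (hxb : ¬ σ.SameCycle x b) :
    ∀ n, ((σ * Equiv.swap a b) ^ n) x = (σ ^ n) x := by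
  intro n
  induction n generalizing x with
  | zero => simp
  | succ n ih =>
    have hxa' : x ≠ a := fun h => hxa (h ▸ Equiv.Perm.SameCycle.refl _ _)
    have hxb' : x ≠ b := fun h => hxb (h ▸ Equiv.Perm.SameCycle.refl _ _)
    rw [pow_succ, pow_succ, Equiv.Perm.mul_apply, Equiv.Perm.mul_apply,
      Equiv.swap_apply_of_ne_of_ne hxa' hxb']
    exact ih (fun h => hxa (Equiv.Perm.sameCycle_apply_left.mp h))
      (fun h => hxb (Equiv.Perm.sameCycle_apply_left.mp h))

lemma sameCycle_mul_swap_far {x y : Fin p} (hxa : ¬ σ.SameCycle x a) (hxb : ¬ σ.SameCycle x b) :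
    (σ * Equiv.swap a b).SameCycle x y ↔ σ.SameCycle x y := by
  rw [sameCycle_nat, sameCycle_nat]
  constructor
  · rintro ⟨n, rfl⟩; exact ⟨n, (pow_mul_swap_far hxa hxb n).symm⟩
  · rintro ⟨n, rfl⟩; exact ⟨n, pow_mul_swap_far hxa hxb n⟩

lemma sameCycle_merge_ab (hab : ¬ σ.SameCycle a b) :
    ∀ x, σ.SameCycle b x → (σ * Equiv.swap a b).SameCycle a x := by
  set ρ := σ * Equiv.swap a b with hρ
  have key : ∀ n, ρ.SameCycle a ((σ ^ n) (σ b)) := by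
    intro n
    induction n with
    | zero =>
      have h1 : ρ.SameCycle a (σ b) := ⟨1, by simp [hρ, mul_swap_apply_left]⟩
      simpa using h1
    | succ n ih =>
      set z := (σ ^ n) (σ b) with hz
      have hzb2 : σ.SameCycle b z := by
        have : σ.SameCycle b (σ b) := ⟨1, by simp⟩
        exact this.trans ⟨(n : ℤ), by simp [hz]⟩
      have hza : z ≠ a := by
        intro h; rw [h] at hzb2; exact hab hzb2.symm
      have hstep : ((σ ^ (n+1)) (σ b)) = σ z := by
        rw [pow_succ', Equiv.Perm.mul_apply, hz]
      by_cases hzb : z = b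
      · rw [hstep, hzb]
        have h1 : ρ.SameCycle a (σ b) := ⟨1, by simp [hρ, mul_swap_apply_left]⟩
        simpa using h1
      · rw [hstep, ← mul_swap_apply_other hza hzb]
        exact ih.trans ⟨1, by simp [hρ]⟩
  intro x hbx
  have : σ.SameCycle (σ b) x := Equiv.Perm.sameCycle_apply_left.mpr hbx
  obtain ⟨n, hn⟩ := sameCycle_nat.mp this
  exact hn ▸ key n

lemma sameCycle_merge_ab' (hab : ¬ σ.SameCycle a b) :
    ∀ x, σ.SameCycle a x → (σ * Equiv.swap a b).SameCycle b x := by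
  have := sameCycle_merge_ab (σ := σ) (a := b) (b := a) (fun h => hab h.symm)
  rw [Equiv.swap_comm b a] at this
  exact this

lemma sameCycle_merge_anchor (hab : ¬ σ.SameCycle a b) :
    (σ * Equiv.swap a b).SameCycle a b :=
  sameCycle_merge_ab hab b (Equiv.Perm.SameCycle.refl _ _)

lemma merge_step_U {x : Fin p} (h : σ.SameCycle a x ∨ σ.SameCycle b x) :
    σ.SameCycle a ((σ * Equiv.swap a b) x) ∨ σ.SameCycle b ((σ * Equiv.swap a b) x) := by
  by_cases hxa : x = a
  · subst hxa; rw [mul_swap_apply_left]; exact Or.inr ⟨1, by simp⟩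
  by_cases hxb : x = b
  · subst hxb; rw [mul_swap_apply_right]; exact Or.inl ⟨1, by simp⟩
  · rw [mul_swap_apply_other hxa hxb]
    rcases h with h | h
    · exact Or.inl (h.trans ⟨1, by simp⟩)
    · exact Or.inr (h.trans ⟨1, by simp⟩)

lemma merge_pow_U {x : Fin p} (h : σ.SameCycle a x ∨ σ.SameCycle b x) (n : ℕ) :
    σ.SameCycle a (((σ * Equiv.swap a b) ^ n) x) ∨
      σ.SameCycle b (((σ * Equiv.swap a b) ^ n) x) := by
  induction n with
  | zero => simpa using h
  | succ n ih =>
    rw [pow_succ', Equiv.Perm.mul_apply]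
    exact merge_step_U ih

/-- The main merge lemma: orbits of `σ * swap a b` when `a, b` are in distinct orbits. -/
lemma merge_sameCycle_iff (hab : ¬ σ.SameCycle a b) (x y : Fin p) :
    (σ * Equiv.swap a b).SameCycle x y ↔
      (σ.SameCycle x y ∨ (σ.SameCycle a x ∧ σ.SameCycle b y) ∨
        (σ.SameCycle b x ∧ σ.SameCycle a y)) := by
  set ρ := σ * Equiv.swap a b with hρ
  constructor
  · intro h
    by_cases hxa : σ.SameCycle a x
    · obtain ⟨n, hn⟩ := sameCycle_nat.mp h
      have := merge_pow_U (σ := σ) (a := a) (b := b) (Or.inl hxa) n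
      rw [hn] at this
      rcases this with hy | hy
      · exact Or.inl (hxa.symm.trans hy)
      · exact Or.inr (Or.inl ⟨hxa, hy⟩)
    by_cases hxb : σ.SameCycle b x
    · obtain ⟨n, hn⟩ := sameCycle_nat.mp h
      have := merge_pow_U (σ := σ) (a := a) (b := b) (Or.inr hxb) n
      rw [hn] at this
      rcases this with hy | hy
      · exact Or.inr (Or.inr ⟨hxb, hy⟩)
      · exact Or.inl (hxb.symm.trans hy)
    · exact Or.inl ((sameCycle_mul_swap_far (fun h' => hxa h'.symm) (fun h' => hxb h'.symm)).mp h)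
  · rintro (h | ⟨h1, h2⟩ | ⟨h1, h2⟩)
    · by_cases hxa : σ.SameCycle a x
      · have hay : σ.SameCycle a y := hxa.trans h
        exact ((sameCycle_merge_ab' hab x hxa).symm.trans (sameCycle_merge_ab' hab y hay))
      by_cases hxb : σ.SameCycle b x
      · have hby : σ.SameCycle b y := hxb.trans h
        exact ((sameCycle_merge_ab hab x hxb).symm.trans (sameCycle_merge_ab hab y hby))
      · exact (sameCycle_mul_swap_far (fun h' => hxa h'.symm) (fun h' => hxb h'.symm)).mpr h
    · exact ((sameCycle_merge_ab' hab x h1).symm.trans (sameCycle_merge_anchor hab).symm).trans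
        (sameCycle_merge_ab hab y h2)
    · exact ((sameCycle_merge_ab hab x h1).symm.trans (sameCycle_merge_anchor hab)).trans
        (sameCycle_merge_ab' hab y h2)

lemma merge_sameCycle_mono (hab : ¬ σ.SameCycle a b) {x y : Fin p} (h : σ.SameCycle x y) :
    (σ * Equiv.swap a b).SameCycle x y :=
  (merge_sameCycle_iff hab x y).mpr (Or.inl h)

end Merge

section Split

variable {p : ℕ} {σ : Equiv.Perm (Fin p)} {a b : Fin p}

/-- splitting: if `a ∼σ b` then multiplying by the swap separates them. -/
lemma not_sameCycle_mul_swap (hab : a ≠ b) (h : σ.SameCycle a b) :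
    ¬ (σ * Equiv.swap a b).SameCycle a b := by
  set ρ := σ * Equiv.swap a b with hρ
  have hρa : ρ a = σ b := mul_swap_apply_left
  -- the walk from `σ b`
  obtain ⟨i, hi⟩ := sameCycle_nat.mp (Equiv.Perm.sameCycle_apply_left.mpr h.symm)
  -- hi : (σ ^ i) (σ b) = a
  have hex : ∃ n, (σ ^ n) (σ b) = a ∨ (σ ^ n) (σ b) = b := ⟨i, Or.inl hi⟩
  classical
  set j := Nat.find hex with hj
  have hspec := Nat.find_spec hex
  have hmin : ∀ k < j, ¬ ((σ ^ k) (σ b) = a ∨ (σ ^ k) (σ b) = b) := fun k hk => Nat.find_min hex hk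
  have claimA : ∀ k, k ≤ j → (ρ ^ k) (σ b) = (σ ^ k) (σ b) := by
    intro k hk
    induction k with
    | zero => simp
    | succ k ih =>
      have hk' : k < j := Nat.lt_of_succ_le hk
      have hik := ih hk'.le
      have hne := hmin k hk'
      push_neg at hne
      rw [pow_succ', pow_succ', Equiv.Perm.mul_apply, Equiv.Perm.mul_apply, hik]
      exact mul_swap_apply_other hne.1 hne.2
  have hKfix : (σ ^ (j + 1)) (σ b) = σ ((σ ^ j) (σ b)) := by
    rw [pow_succ', Equiv.Perm.mul_apply]
  -- show the find lands on `a`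
  have hja : (σ ^ j) (σ b) = a := by
    rcases hspec with h1 | h1
    · exact h1
    · exfalso
      -- period j+1 : (σ ^ (j+1)) (σ b) = σ b
      have hper : (σ ^ (j + 1)) (σ b) = σ b := by rw [hKfix, h1]
      have := pow_apply_mod hper i
      rw [hi] at this
      have hlt : i % (j + 1) < j + 1 := Nat.mod_lt _ (Nat.succ_pos j)
      rcases Nat.lt_succ_iff_lt_or_eq.mp hlt with h2 | h2
      · exact hmin _ h2 (Or.inl this.symm)
      · rw [h2] at this
        exact hab (this.trans h1)
  -- ρ has period j+1 at a
  have hρper : (ρ ^ (j + 1)) a = a := by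
    rw [pow_succ, Equiv.Perm.mul_apply, hρa, claimA j le_rfl, hja]
  intro hcon
  obtain ⟨n, hn⟩ := sameCycle_nat.mp hcon
  rw [pow_apply_mod hρper n] at hn
  have hlt : n % (j + 1) < j + 1 := Nat.mod_lt _ (Nat.succ_pos j)
  rcases Nat.eq_zero_or_pos (n % (j + 1)) with h0 | h0
  · rw [h0] at hn; simp at hn; exact hab hn
  · obtain ⟨m, hm⟩ := Nat.exists_eq_succ_of_ne_zero h0.ne'
    rw [hm] at hn hlt
    have hmj : m < j := Nat.lt_of_succ_lt_succ hlt
    have : (ρ ^ (m + 1)) a = (σ ^ m) (σ b) := by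
      rw [pow_succ, Equiv.Perm.mul_apply, hρa, claimA m hmj.le]
    rw [this] at hn
    exact hmin m hmj (Or.inr hn)

end Split
section Count

variable {p : ℕ} {σ : Equiv.Perm (Fin p)} {a b : Fin p}

lemma mem_Mins_iff_eq_min' {z : Fin p} (hza : σ.SameCycle a z) :
    z ∈ Mins σ ↔ z = (orbitF σ a).min' ⟨a, self_mem_orbitF⟩ := by
  set ma := (orbitF σ a).min' ⟨a, self_mem_orbitF⟩ with hma
  have hmaA : ma ∈ orbitF σ a := Finset.min'_mem _ _
  constructor
  · intro h
    refine le_antisymm ?_ ?_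
    · exact (mem_Mins.1 h) ma ((hza.symm).trans (mem_orbitF.1 hmaA))
    · exact Finset.min'_le _ _ (mem_orbitF.2 hza)
  · intro h
    rw [mem_Mins]
    intro y hy
    have : y ∈ orbitF σ a := mem_orbitF.2 (hza.trans hy)
    rw [h]
    exact Finset.min'_le _ _ this

lemma mins_merge_U (hab : ¬ σ.SameCycle a b) {z : Fin p} (hza : σ.SameCycle a z) :
    (z ∈ Mins (σ * Equiv.swap a b) ↔
      z = min ((orbitF σ a).min' ⟨a, self_mem_orbitF⟩)
        ((orbitF σ b).min' ⟨b, self_mem_orbitF⟩)) := by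
  set ρ := σ * Equiv.swap a b with hρ
  set ma := (orbitF σ a).min' ⟨a, self_mem_orbitF⟩ with hma
  set mb := (orbitF σ b).min' ⟨b, self_mem_orbitF⟩ with hmb
  have hzb : ¬ σ.SameCycle b z := fun h => hab (hza.trans h.symm)
  have horb : ∀ u, ρ.SameCycle z u ↔ (u ∈ orbitF σ a ∪ orbitF σ b) := by
    intro u
    rw [hρ, merge_sameCycle_iff hab, Finset.mem_union, mem_orbitF, mem_orbitF]
    constructor
    · rintro (h | ⟨h1, h2⟩ | ⟨h1, h2⟩)
      · exact Or.inl (hza.trans h)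
      · exact Or.inr h2
      · exact absurd h1 hzb
    · rintro (h | h)
      · exact Or.inl (hza.symm.trans h)
      · exact Or.inr (Or.inl ⟨hza, h⟩)
  have hminmem : min ma mb ∈ orbitF σ a ∪ orbitF σ b := by
    rcases min_choice ma mb with h | h <;> rw [h]
    · exact Finset.mem_union_left _ (Finset.min'_mem _ _)
    · exact Finset.mem_union_right _ (Finset.min'_mem _ _)
  constructor
  · intro h
    refine le_antisymm ?_ ?_
    · exact (mem_Mins.1 h) _ ((horb _).mpr hminmem)
    · have hz : z ∈ orbitF σ a ∪ orbitF σ b :=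
        Finset.mem_union_left _ (mem_orbitF.2 hza)
      rcases Finset.mem_union.1 hz with h' | h'
      · exact le_trans (min_le_left _ _) (Finset.min'_le _ _ h')
      · exact le_trans (min_le_right _ _) (Finset.min'_le _ _ h')
  · intro h
    rw [mem_Mins]
    intro y hy
    rcases Finset.mem_union.1 ((horb y).mp hy) with h' | h'
    · exact h ▸ le_trans (min_le_left _ _) (Finset.min'_le _ _ h')
    · exact h ▸ le_trans (min_le_right _ _) (Finset.min'_le _ _ h')

lemma merge_Mins (hab : ¬ σ.SameCycle a b) :
    Mins (σ * Equiv.swap a b) =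
      (Mins σ).erase (max ((orbitF σ a).min' ⟨a, self_mem_orbitF⟩)
        ((orbitF σ b).min' ⟨b, self_mem_orbitF⟩)) := by
  set ma := (orbitF σ a).min' ⟨a, self_mem_orbitF⟩ with hma
  set mb := (orbitF σ b).min' ⟨b, self_mem_orbitF⟩ with hmb
  have hmaa : σ.SameCycle a ma := mem_orbitF.1 (Finset.min'_mem _ _)
  have hmbb : σ.SameCycle b mb := mem_orbitF.1 (Finset.min'_mem _ _)
  have hmamb : ma ≠ mb := by
    intro h
    exact hab (hmaa.trans (h ▸ hmbb).symm)
  ext z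
  rw [Finset.mem_erase]
  by_cases hza : σ.SameCycle a z
  · rw [mins_merge_U hab hza, ← hma, ← hmb, mem_Mins_iff_eq_min' hza, ← hma]
    have hzmb : z ≠ mb := fun h => hab (hza.trans (h ▸ hmbb).symm)
    rcases lt_or_gt_of_ne hmamb with hlt | hlt
    · rw [min_eq_left hlt.le, max_eq_right hlt.le]
      exact ⟨fun h => ⟨hzmb, h⟩, fun h => h.2⟩
    · rw [min_eq_right hlt.le, max_eq_left hlt.le]
      exact ⟨fun h => absurd h hzmb, fun h => absurd h.2 h.1⟩
  · by_cases hzb : σ.SameCycle b z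
    · have hab' : ¬ σ.SameCycle b a := fun h => hab h.symm
      have := mins_merge_U hab' hzb
      rw [Equiv.swap_comm b a] at this
      rw [this, mem_Mins_iff_eq_min' hzb]
      have hzma : z ≠ ma := fun h =>
        hab ((show σ.SameCycle a z by rw [h]; exact hmaa).trans hzb.symm)
      show z = min mb ma ↔ z ≠ max ma mb ∧ z = mb
      rcases lt_or_gt_of_ne hmamb with hlt | hlt
      · rw [min_eq_right hlt.le, max_eq_right hlt.le]
        exact ⟨fun h => absurd h hzma, fun h => absurd h.2 h.1⟩
      · rw [min_eq_left hlt.le, max_eq_left hlt.le]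
        exact ⟨fun h => ⟨hzma, h⟩, fun h => h.2⟩
    · have hrel : ∀ y, (σ * Equiv.swap a b).SameCycle z y ↔ σ.SameCycle z y := by
        intro y
        rw [merge_sameCycle_iff hab]
        constructor
        · rintro (h | ⟨h1, h2⟩ | ⟨h1, h2⟩)
          · exact h
          · exact absurd h1 hza
          · exact absurd h1 hzb
        · exact Or.inl
      have hzM : z ≠ max ma mb := by
        rcases max_choice ma mb with h | h <;> rw [h]
        · exact fun hc => hza (hc ▸ hmaa).symm.symm
        · exact fun hc => hzb (hc ▸ hmbb).symm.symm
      simp only [mem_Mins, hrel]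
      rw [← mem_Mins]
      exact ⟨fun h => ⟨hzM, h⟩, fun h => h.2⟩

lemma merge_myC (hab : ¬ σ.SameCycle a b) :
    myC (σ * Equiv.swap a b) + 1 = myC σ := by
  have hmaa : σ.SameCycle a ((orbitF σ a).min' ⟨a, self_mem_orbitF⟩) :=
    mem_orbitF.1 (Finset.min'_mem _ _)
  have hmbb : σ.SameCycle b ((orbitF σ b).min' ⟨b, self_mem_orbitF⟩) :=
    mem_orbitF.1 (Finset.min'_mem _ _)
  have hMmem : max ((orbitF σ a).min' ⟨a, self_mem_orbitF⟩)
      ((orbitF σ b).min' ⟨b, self_mem_orbitF⟩) ∈ Mins σ := by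
    rcases max_choice ((orbitF σ a).min' ⟨a, self_mem_orbitF⟩)
      ((orbitF σ b).min' ⟨b, self_mem_orbitF⟩) with h | h <;> rw [h]
    · exact min'_orbitF_mem_Mins σ a
    · exact min'_orbitF_mem_Mins σ b
  unfold myC
  rw [merge_Mins hab, Finset.card_erase_of_mem hMmem]
  have : 0 < (Mins σ).card := Finset.card_pos.2 ⟨_, hMmem⟩
  omega

lemma split_myC (hab : a ≠ b) (h : σ.SameCycle a b) :
    myC (σ * Equiv.swap a b) = myC σ + 1 := by
  have hS := not_sameCycle_mul_swap hab h
  have := merge_myC hS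
  rw [mul_assoc, Equiv.swap_mul_self, mul_one] at this
  omega

lemma myC_mul_swap_ge (hab : a ≠ b) : myC σ ≤ myC (σ * Equiv.swap a b) + 1 := by
  by_cases h : σ.SameCycle a b
  · rw [split_myC hab h]; omega
  · rw [merge_myC h]

lemma myC_mul_swap_le (hab : a ≠ b) : myC (σ * Equiv.swap a b) ≤ myC σ + 1 := by
  by_cases h : σ.SameCycle a b
  · rw [split_myC hab h]
  · have := merge_myC h; omega

end Count

section Length

variable {p : ℕ} {σ : Equiv.Perm (Fin p)} {a b : Fin p}

lemma merge_myC_left (hab : ¬ σ.SameCycle a b) :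
    myC (Equiv.swap a b * σ) + 1 = myC σ := by
  rw [Equiv.swap_mul_eq_mul_swap]
  apply merge_myC
  rwa [Equiv.Perm.sameCycle_inv_apply_left, Equiv.Perm.sameCycle_inv_apply_right]

lemma split_myC_left (hab : a ≠ b) (h : σ.SameCycle a b) :
    myC (Equiv.swap a b * σ) = myC σ + 1 := by
  rw [Equiv.swap_mul_eq_mul_swap]
  apply split_myC (fun hc => hab (σ⁻¹.injective hc))
  rwa [Equiv.Perm.sameCycle_inv_apply_left, Equiv.Perm.sameCycle_inv_apply_right]

lemma exists_swap_decomp_aux :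
    ∀ (n : ℕ) (σ : Equiv.Perm (Fin p)), p - myC σ = n →
      ∃ l : List (Equiv.Perm (Fin p)), (∀ τ ∈ l, τ.IsSwap) ∧ l.prod = σ ∧ l.length = n := by
  intro n
  induction n with
  | zero =>
    intro σ hσ
    have h1 : myC σ = p := le_antisymm (myC_le σ) (by omega)
    rw [myC_eq_p_iff.1 h1]
    exact ⟨[], by simp, by simp, rfl⟩
  | succ n ih =>
    intro σ hσ
    have hne : σ ≠ 1 := by
      intro h; rw [h, myC_one] at hσ; omega
    have : ∃ x, σ x ≠ x := by
      by_contra hc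
      push_neg at hc
      exact hne (Equiv.ext fun x => (hc x).trans (Equiv.Perm.one_apply x).symm)
    obtain ⟨x, hx⟩ := this
    have hab : x ≠ σ x := fun h => hx h.symm
    have hsc : σ.SameCycle x (σ x) := ⟨1, by simp⟩
    have hsplit := split_myC hab hsc
    have hle := myC_le (σ * Equiv.swap x (σ x))
    obtain ⟨l, hl1, hl2, hl3⟩ := ih (σ * Equiv.swap x (σ x)) (by omega)
    refine ⟨l ++ [Equiv.swap x (σ x)], ?_, ?_, ?_⟩
    · intro τ hτ
      rcases List.mem_append.1 hτ with h | h
      · exact hl1 τ h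
      · rw [List.mem_singleton.1 h]
        exact ⟨x, σ x, hab, rfl⟩
    · rw [List.prod_append, hl2, List.prod_singleton, mul_assoc, Equiv.swap_mul_self, mul_one]
    · simp [hl3]

lemma myC_list_prod_ge :
    ∀ l : List (Equiv.Perm (Fin p)), (∀ τ ∈ l, τ.IsSwap) → p ≤ myC l.prod + l.length := by
  intro l
  induction l with
  | nil => simp [myC_one]
  | cons t l ih =>
    intro hl
    obtain ⟨a, b, hab, rfl⟩ := hl t List.mem_cons_self
    have h1 : myC l.prod ≤ myC (Equiv.swap a b * l.prod) + 1 := by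
      have := merge_myC_left (σ := l.prod) (a := a) (b := b)
      by_cases h : l.prod.SameCycle a b
      · rw [split_myC_left hab h]; omega
      · rw [← merge_myC_left h]
    have h2 := ih (fun τ hτ => hl τ (List.mem_cons_of_mem _ hτ))
    rw [List.prod_cons]
    simp only [List.length_cons]
    omega

lemma permLength_add_myC (σ : Equiv.Perm (Fin p)) : permLength σ + myC σ = p := by
  have hmem : (p - myC σ) ∈
      {k | ∃ l : List (Equiv.Perm (Fin p)), (∀ τ ∈ l, τ.IsSwap) ∧ l.prod = σ ∧ l.length = k} :=
    exists_swap_decomp_aux (p - myC σ) σ rfl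
  have hlb : ∀ k ∈
      {k | ∃ l : List (Equiv.Perm (Fin p)), (∀ τ ∈ l, τ.IsSwap) ∧ l.prod = σ ∧ l.length = k},
      p - myC σ ≤ k := by
    rintro k ⟨l, hl1, rfl, rfl⟩
    have := myC_list_prod_ge l hl1
    omega
  have h1 : permLength σ = p - myC σ :=
    le_antisymm (Nat.sInf_le hmem) (le_csInf ⟨_, hmem⟩ hlb)
  have := myC_le σ
  omega

lemma exists_minimal_decomp (σ : Equiv.Perm (Fin p)) :
    ∃ l : List (Equiv.Perm (Fin p)), (∀ τ ∈ l, τ.IsSwap) ∧ l.prod = σ ∧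
      l.length = permLength σ := by
  have hmem : (p - myC σ) ∈
      {k | ∃ l : List (Equiv.Perm (Fin p)), (∀ τ ∈ l, τ.IsSwap) ∧ l.prod = σ ∧ l.length = k} :=
    exists_swap_decomp_aux (p - myC σ) σ rfl
  have := Nat.sInf_mem (⟨_, hmem⟩ : Set.Nonempty _)
  exact this

lemma permLength_mul_le (σ τ : Equiv.Perm (Fin p)) :
    permLength (σ * τ) ≤ permLength σ + permLength τ := by
  obtain ⟨l1, h11, h12, h13⟩ := exists_minimal_decomp σ
  obtain ⟨l2, h21, h22, h23⟩ := exists_minimal_decomp τ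
  have hmem : permLength σ + permLength τ ∈
      {k | ∃ l : List (Equiv.Perm (Fin p)), (∀ τ' ∈ l, τ'.IsSwap) ∧ l.prod = σ * τ ∧
        l.length = k} := by
    refine ⟨l1 ++ l2, ?_, ?_, ?_⟩
    · intro τ' hτ'
      rcases List.mem_append.1 hτ' with h | h
      · exact h11 τ' h
      · exact h21 τ' h
    · rw [List.prod_append, h12, h22]
    · simp [h13, h23]
  exact Nat.sInf_le hmem

lemma permLength_one : permLength (1 : Equiv.Perm (Fin p)) = 0 := by
  have := permLength_add_myC (1 : Equiv.Perm (Fin p))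
  rw [myC_one] at this
  omega

/-- if the length of `σ⁻¹τ` exactly bridges the gap, orbits of `σ` refine orbits of `τ`. -/
lemma refines_of_tight :
    ∀ (l : List (Equiv.Perm (Fin p))), (∀ τ ∈ l, τ.IsSwap) → ∀ σ : Equiv.Perm (Fin p),
      myC σ ≤ myC (σ * l.prod) + l.length ∧
      (myC σ = myC (σ * l.prod) + l.length →
        ∀ x y, σ.SameCycle x y → (σ * l.prod).SameCycle x y) := by
  intro l
  induction l with
  | nil => intro _ σ; simp
  | cons t l ih =>
    intro hl σ
    obtain ⟨a, b, hab, rfl⟩ := hl t List.mem_cons_self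
    have hassoc : σ * (Equiv.swap a b :: l).prod = (σ * Equiv.swap a b) * l.prod := by
      rw [List.prod_cons, mul_assoc]
    have h1 : myC σ ≤ myC (σ * Equiv.swap a b) + 1 := myC_mul_swap_ge hab
    obtain ⟨ih1, ih2⟩ := ih (fun τ hτ => hl τ (List.mem_cons_of_mem _ hτ)) (σ * Equiv.swap a b)
    constructor
    · rw [hassoc]
      simp only [List.length_cons]
      omega
    · intro heq x y hxy
      rw [hassoc] at heq
      simp only [List.length_cons] at heq
      have hmerge : ¬ σ.SameCycle a b := by
        intro hc
        have := split_myC hab hc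
        omega
      have hstep : myC (σ * Equiv.swap a b) + 1 = myC σ := merge_myC hmerge
      have heq2 : myC (σ * Equiv.swap a b) = myC ((σ * Equiv.swap a b) * l.prod) + l.length := by
        omega
      rw [hassoc]
      exact ih2 heq2 x y (merge_sameCycle_mono hmerge hxy)

end Length

section Succ

variable {p : ℕ}

/-- `y` is the cyclic successor of `x` in the finset `s` (w.r.t. increasing order). -/
def IsSucc (s : Finset (Fin p)) (x y : Fin p) : Prop :=
  y ∈ s ∧ ((x < y ∧ ∀ z ∈ s, x < z → y ≤ z) ∨ ((∀ z ∈ s, z ≤ x) ∧ ∀ z ∈ s, y ≤ z))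

/-- the increasing cycle on a finset. -/
def incCycle (s : Finset (Fin p)) : Equiv.Perm (Fin p) := (s.sort (· ≤ ·)).formPerm

lemma IsSucc.mem {s : Finset (Fin p)} {x y : Fin p} (h : IsSucc s x y) : y ∈ s := h.1

lemma IsSucc.unique {s : Finset (Fin p)} {x y y' : Fin p}
    (h : IsSucc s x y) (h' : IsSucc s x y') : y = y' := by
  obtain ⟨hy, h1 | h2⟩ := h
  · obtain ⟨hy', h1' | h2'⟩ := h'
    · exact le_antisymm (h1.2 y' hy' h1'.1) (h1'.2 y hy h1.1)
    · exact absurd h1.1 (not_lt.2 (h2'.1 y hy))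
  · obtain ⟨hy', h1' | h2'⟩ := h'
    · exact absurd h1'.1 (not_lt.2 (h2.1 y' hy'))
    · exact le_antisymm (h2.2 y' hy') (h2'.2 y hy)

lemma IsSucc.mono {s t : Finset (Fin p)} (hts : t ⊆ s) {x y : Fin p}
    (hy : y ∈ t) (h : IsSucc s x y) : IsSucc t x y := by
  obtain ⟨_, h1 | h2⟩ := h
  · exact ⟨hy, Or.inl ⟨h1.1, fun z hz => h1.2 z (hts hz)⟩⟩
  · exact ⟨hy, Or.inr ⟨fun z hz => h2.1 z (hts hz), fun z hz => h2.2 z (hts hz)⟩⟩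

/-- the key composition lemma: removing `x` and composing successor relations. -/
lemma IsSucc.comp_erase {s : Finset (Fin p)} {z x w : Fin p}
    (h1 : IsSucc s z x) (h2 : IsSucc s x w) (hwx : w ≠ x) : IsSucc (s.erase x) z w := by
  have hws : w ∈ s.erase x := Finset.mem_erase.2 ⟨hwx, h2.1⟩
  obtain ⟨hxs, C1 | C2⟩ := h1 <;> obtain ⟨hws', D1 | D2⟩ := h2
  · refine ⟨hws, Or.inl ⟨C1.1.trans D1.1, ?_⟩⟩
    intro u hu hzu
    obtain ⟨hux, hus⟩ := Finset.mem_erase.1 hu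
    have hxu : x ≤ u := C1.2 u hus hzu
    exact D1.2 u hus (lt_of_le_of_ne hxu (Ne.symm hux))
  · refine ⟨hws, Or.inr ⟨?_, ?_⟩⟩
    · intro u hu
      obtain ⟨hux, hus⟩ := Finset.mem_erase.1 hu
      by_contra hc
      push_neg at hc
      exact hux (le_antisymm (D2.1 u hus) (C1.2 u hus hc))
    · intro u hu
      exact D2.2 u (Finset.mem_erase.1 hu).2
  · refine ⟨hws, Or.inr ⟨fun u hu => C2.1 u (Finset.mem_erase.1 hu).2, ?_⟩⟩
    intro u hu
    obtain ⟨hux, hus⟩ := Finset.mem_erase.1 hu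
    exact D1.2 u hus (lt_of_le_of_ne (C2.2 u hus) (Ne.symm hux))
  · exact absurd (le_antisymm (D2.1 w hws') (C2.2 w hws')) hwx

lemma incCycle_apply_of_not_mem {s : Finset (Fin p)} {x : Fin p} (hx : x ∉ s) :
    incCycle s x = x :=
  List.formPerm_apply_of_notMem (by rwa [Finset.mem_sort])

lemma isSucc_incCycle {s : Finset (Fin p)} {x : Fin p} (hx : x ∈ s) :
    IsSucc s x (incCycle s x) := by
  classical
  have hnd : (s.sort (· ≤ ·)).Nodup := s.sort_nodup _
  have hsorted : (s.sort (· ≤ ·)).Pairwise (· < ·) := s.sortedLT_sort.pairwise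
  have hmem : ∀ {z : Fin p}, z ∈ s.sort (· ≤ ·) ↔ z ∈ s := fun {z} => Finset.mem_sort _
  set l := s.sort (· ≤ ·) with hl
  have hmono : ∀ (a b : ℕ) (ha : a < l.length) (hb : b < l.length), a < b → l[a] < l[b] := by
    intro a b ha hb hab
    have := List.pairwise_iff_getElem.1 hsorted a b ha hb hab
    simpa [List.get_eq_getElem] using this
  obtain ⟨i, hi, hix⟩ := List.getElem_of_mem (hmem.mpr hx)
  have happ : incCycle s x = l[(i+1) % l.length]'(Nat.mod_lt _ (by omega)) := by
    rw [incCycle, ← hl, ← hix, List.formPerm_apply_getElem _ hnd]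
  have hidx_le : ∀ (a b : ℕ) (ha : a < l.length) (hb : b < l.length), a ≤ b → l[a] ≤ l[b] := by
    intro a b ha hb hab
    rcases Nat.lt_or_ge a b with h | h
    · exact (hmono a b ha hb h).le
    · have : a = b := le_antisymm hab h
      subst this; exact le_rfl
  -- index of any z ∈ s
  have hindex : ∀ z ∈ s, ∃ (j : ℕ) (hj : j < l.length), l[j] = z := fun z hz =>
    List.getElem_of_mem (hmem.mpr hz)
  by_cases hlast : i + 1 < l.length
  · rw [happ]
    have hmodeq : (i+1) % l.length = i + 1 := Nat.mod_eq_of_lt hlast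
    refine ⟨?_, Or.inl ⟨?_, ?_⟩⟩
    · rw [← hmem]
      simp only [hmodeq]
      exact List.getElem_mem _
    · rw [← hix]
      simp only [hmodeq]
      exact hmono i (i+1) hi hlast (Nat.lt_succ_self i)
    · intro z hz hxz
      obtain ⟨j, hj, hjz⟩ := hindex z hz
      have hij : i < j := by
        by_contra hc
        push_neg at hc
        exact absurd (hjz ▸ hix ▸ hidx_le j i hj hi hc) (not_le.2 hxz)
      simp only [hmodeq]
      rw [← hjz]
      exact hidx_le (i+1) j (by omega) hj hij
  · -- x is the last element
    have hilen : i + 1 = l.length := by omega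
    have hmod0 : (i+1) % l.length = 0 := by rw [hilen]; exact Nat.mod_self _
    rw [happ]
    refine ⟨?_, Or.inr ⟨?_, ?_⟩⟩
    · rw [← hmem]
      simp only [hmod0]
      exact List.getElem_mem _
    · intro z hz
      obtain ⟨j, hj, hjz⟩ := hindex z hz
      rw [← hjz, ← hix]
      exact hidx_le j i hj hi (by omega)
    · intro z hz
      obtain ⟨j, hj, hjz⟩ := hindex z hz
      rw [← hjz]
      simp only [hmod0]
      exact hidx_le 0 j (by omega) hj (Nat.zero_le _)

lemma incCycle_mem {s : Finset (Fin p)} {x : Fin p} (hx : x ∈ s) : incCycle s x ∈ s :=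
  (isSucc_incCycle hx).mem

lemma incCycle_singleton {x : Fin p} : incCycle ({x} : Finset (Fin p)) = 1 := by
  rw [incCycle, Finset.sort_singleton, List.formPerm_singleton]

/-- `σ` has increasing cycles. -/
def Inc (σ : Equiv.Perm (Fin p)) : Prop := ∀ x, IsSucc (orbitF σ x) x (σ x)

/-- the orbit partition of `σ` is non-crossing (stated on the relation level). -/
def NCr (σ : Equiv.Perm (Fin p)) : Prop :=
  ¬ ∃ a b c d : Fin p, a < b ∧ b < c ∧ c < d ∧ σ.SameCycle a c ∧ σ.SameCycle b d ∧
    ¬ σ.SameCycle a b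

lemma orbitF_fixed {σ : Equiv.Perm (Fin p)} {x : Fin p} (hx : σ x = x) :
    orbitF σ x = {x} := by
  ext z
  rw [mem_orbitF, Finset.mem_singleton]
  rw [sameCycle_fixed hx]

lemma isSucc_fixed {σ : Equiv.Perm (Fin p)} {x : Fin p} (hx : σ x = x) :
    IsSucc (orbitF σ x) x (σ x) := by
  rw [hx, orbitF_fixed hx]
  exact ⟨Finset.mem_singleton_self x,
    Or.inr ⟨fun z hz => (Finset.mem_singleton.1 hz).le, fun z hz => (Finset.mem_singleton.1 hz).ge⟩⟩

lemma inc_one : Inc (1 : Equiv.Perm (Fin p)) := fun x => isSucc_fixed rfl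

lemma ncr_one : NCr (1 : Equiv.Perm (Fin p)) := by
  rintro ⟨a, b, c, d, hab, hbc, hcd, hac, hbd, hnab⟩
  rw [Equiv.Perm.sameCycle_one] at hac
  exact absurd hac (ne_of_lt (hab.trans hbc))

end Succ

section Detach

variable {p : ℕ} {σ : Equiv.Perm (Fin p)} {x : Fin p}

lemma detach_form (hx : σ x ≠ x) :
    Equiv.swap x (σ x) * σ = σ * Equiv.swap (σ⁻¹ x) x := by
  rw [Equiv.swap_mul_eq_mul_swap, Equiv.Perm.inv_apply_self]

lemma detach_fix : (Equiv.swap x (σ x) * σ) x = x := by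
  simp [Equiv.Perm.mul_apply]

lemma detach_apply_of_ne {y : Fin p} (hy : y ≠ x) (hσy : σ y ≠ x) :
    (Equiv.swap x (σ x) * σ) y = σ y := by
  rw [Equiv.Perm.mul_apply]
  apply Equiv.swap_apply_of_ne_of_ne hσy
  intro h
  exact hy (σ.injective h)

lemma detach_apply_pre (hx : σ x ≠ x) : (Equiv.swap x (σ x) * σ) (σ⁻¹ x) = σ x := by
  rw [Equiv.Perm.mul_apply, Equiv.Perm.apply_inv_self, Equiv.swap_apply_left]

lemma detach_sameCycle (hx : σ x ≠ x) {u v : Fin p} (hu : u ≠ x) (hv : v ≠ x) :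
    (Equiv.swap x (σ x) * σ).SameCycle u v ↔ σ.SameCycle u v := by
  have ha : σ.SameCycle (σ⁻¹ x) x := ⟨1, by simp⟩
  have hanb : σ⁻¹ x ≠ x := fun h => hx (by conv_lhs => rw [← h, Equiv.Perm.apply_inv_self])
  have hsplit := not_sameCycle_mul_swap hanb ha
  have hmain := merge_sameCycle_iff hsplit u v
  rw [mul_assoc, Equiv.swap_mul_self, mul_one] at hmain
  rw [detach_form hx]
  set ρ := σ * Equiv.swap (σ⁻¹ x) x with hρ
  have hρx : ρ x = x := by
    rw [hρ, Equiv.Perm.mul_apply, Equiv.swap_apply_right, Equiv.Perm.apply_inv_self]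
  constructor
  · intro h
    exact hmain.mpr (Or.inl h)
  · intro h
    rcases hmain.mp h with h' | h' | h'
    · exact h'
    · exact absurd ((sameCycle_fixed hρx).1 h'.2) hv
    · exact absurd ((sameCycle_fixed hρx).1 h'.1) hu

lemma detach_myC (hx : σ x ≠ x) : myC (Equiv.swap x (σ x) * σ) = myC σ + 1 :=
  split_myC_left (fun h => hx h.symm) ⟨1, by simp⟩

lemma detach_sameCycle_fixed (hx : σ x ≠ x) {v : Fin p} :
    (Equiv.swap x (σ x) * σ).SameCycle x v ↔ v = x :=
  sameCycle_fixed detach_fix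

lemma detach_orbitF (hx : σ x ≠ x) {z : Fin p} (hz : z ≠ x) :
    orbitF (Equiv.swap x (σ x) * σ) z = (orbitF σ z).erase x := by
  ext u
  rw [mem_orbitF, Finset.mem_erase, mem_orbitF]
  by_cases hu : u = x
  · subst hu
    exact ⟨fun h => absurd ((sameCycle_fixed detach_fix).1 (Equiv.Perm.sameCycle_comm.1 h)) hz,
      fun h => absurd rfl h.1⟩
  · rw [detach_sameCycle hx hz hu]
    exact ⟨fun h => ⟨hu, h⟩, fun h => h.2⟩

lemma mem_of_sameCycle_nontrivial {s : Finset (Fin p)}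
    (hsupp : ∀ y, σ y ≠ y → y ∈ s) (hx : σ x ≠ x) {u : Fin p} (h : σ.SameCycle x u) :
    u ∈ s :=
  hsupp u (fun hc => hx (h.apply_eq_self_iff.mpr hc))

lemma detach_suppIn {s : Finset (Fin p)} (hsupp : ∀ y, σ y ≠ y → y ∈ s) (hx : σ x ≠ x) :
    ∀ y, (Equiv.swap x (σ x) * σ) y ≠ y → y ∈ s.erase x := by
  intro y hy
  by_cases hyx : y = x
  · subst hyx; exact absurd detach_fix hy
  · rw [Finset.mem_erase]
    refine ⟨hyx, hsupp y ?_⟩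
    intro hc
    apply hy
    have hσyx : σ y ≠ x := by
      rw [hc]; exact hyx
    rw [detach_apply_of_ne hyx hσyx, hc]

lemma detach_Inc (hx : σ x ≠ x) (hInc : Inc σ) : Inc (Equiv.swap x (σ x) * σ) := by
  intro z
  by_cases hz : z = x
  · subst hz
    exact isSucc_fixed detach_fix
  · rw [detach_orbitF hx hz]
    by_cases hσz : σ z = x
    · have hrw : (Equiv.swap x (σ x) * σ) z = σ x := by
        rw [Equiv.Perm.mul_apply, hσz, Equiv.swap_apply_left]
      rw [hrw]
      have h1 : IsSucc (orbitF σ z) z x := by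
        have := hInc z; rwa [hσz] at this
      have h2 : IsSucc (orbitF σ z) x (σ x) := by
        have := hInc x
        rwa [orbitF_eq_of_sameCycle (⟨1, by simpa using hσz⟩ : σ.SameCycle z x)]
      exact h1.comp_erase h2 hx
    · rw [detach_apply_of_ne hz hσz]
      refine ((hInc z).mono (Finset.erase_subset _ _) ?_)
      exact Finset.mem_erase.2 ⟨hσz, apply_mem_orbitF⟩

lemma detach_NCr (hx : σ x ≠ x) (hN : NCr σ) : NCr (Equiv.swap x (σ x) * σ) := by
  rintro ⟨a, b, c, d, hab, hbc, hcd, hac, hbd, hnab⟩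
  have hane : a ≠ x := by
    intro h; subst h
    exact (ne_of_lt (hab.trans hbc)) ((detach_sameCycle_fixed hx).1 hac).symm
  have hcne : c ≠ x := by
    intro h; subst h
    exact (ne_of_lt (hab.trans hbc)).symm
      ((Equiv.Perm.sameCycle_comm.1 hac).eq_of_left detach_fix)
  have hbne : b ≠ x := by
    intro h; subst h
    exact (ne_of_lt (hbc.trans hcd)) ((detach_sameCycle_fixed hx).1 hbd).symm
  have hdne : d ≠ x := by
    intro h; subst h
    exact (ne_of_lt (hbc.trans hcd)).symm
      ((Equiv.Perm.sameCycle_comm.1 hbd).eq_of_left detach_fix)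
  exact hN ⟨a, b, c, d, hab, hbc, hcd, (detach_sameCycle hx hane hcne).1 hac,
    (detach_sameCycle hx hbne hdne).1 hbd,
    fun h => hnab ((detach_sameCycle hx hane hbne).2 h)⟩

end Detach

section Attach

variable {p : ℕ} {σ : Equiv.Perm (Fin p)} {x : Fin p} {s : Finset (Fin p)}

lemma attach_Inc (hsupp : ∀ y, σ y ≠ y → y ∈ s) (hx : σ x ≠ x)
    (hiso : IsSucc s x (σ x)) (hInc' : Inc (Equiv.swap x (σ x) * σ)) : Inc σ := by
  intro z
  by_cases hzx : z = x
  · subst hzx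
    have hBs : orbitF σ z ⊆ s := fun u hu =>
      mem_of_sameCycle_nontrivial hsupp hx (mem_orbitF.1 hu)
    exact hiso.mono hBs apply_mem_orbitF
  · by_cases hzo : σ.SameCycle z x
    · have hBs : orbitF σ z ⊆ s := fun u hu =>
        mem_of_sameCycle_nontrivial hsupp hx (hzo.symm.trans (mem_orbitF.1 hu))
      have hxB : x ∈ orbitF σ z := mem_orbitF.2 hzo
      have hwB : σ x ∈ orbitF σ z := mem_orbitF.2 (hzo.trans ⟨1, by simp⟩)
      have hzB : z ∈ orbitF σ z := self_mem_orbitF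
      have hD0 := hInc' z
      rw [detach_orbitF hx hzx] at hD0
      by_cases hσzx : σ z = x
      · have hσ'z : (Equiv.swap x (σ x) * σ) z = σ x := by
          rw [Equiv.Perm.mul_apply, hσzx, Equiv.swap_apply_left]
        rw [hσ'z] at hD0
        rw [hσzx]
        obtain ⟨hwB', D⟩ := hD0
        obtain ⟨hwS, E⟩ := hiso
        rcases D with D1 | D2 <;> rcases E with E1 | E2
        · rcases lt_trichotomy z x with h | h | h
          · refine ⟨hxB, Or.inl ⟨h, ?_⟩⟩
            intro u hu hzu
            by_cases hux : u = x
            · exact hux.ge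
            · exact E1.1.le.trans (D1.2 u (Finset.mem_erase.2 ⟨hux, hu⟩) hzu)
          · exact absurd h hzx
          · exact absurd (E1.2 z (hBs hzB) h) (not_le.2 D1.1)
        · exact absurd (E2.2 z (hBs hzB)) (not_le.2 D1.1)
        · rcases lt_trichotomy z x with h | h | h
          · refine ⟨hxB, Or.inl ⟨h, ?_⟩⟩
            intro u hu hzu
            by_cases hux : u = x
            · exact hux.ge
            · exact absurd (D2.1 u (Finset.mem_erase.2 ⟨hux, hu⟩)) (not_le.2 hzu)
          · exact absurd h hzx
          · refine ⟨hxB, Or.inr ⟨?_, ?_⟩⟩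
            · intro u hu
              by_cases hux : u = x
              · exact hux ▸ h.le
              · exact D2.1 u (Finset.mem_erase.2 ⟨hux, hu⟩)
            · intro u hu
              by_cases hux : u = x
              · exact hux.ge
              · exact E1.1.le.trans (D2.2 u (Finset.mem_erase.2 ⟨hux, hu⟩))
        · have h : z < x := lt_of_le_of_ne (E2.1 z (hBs hzB)) hzx
          refine ⟨hxB, Or.inl ⟨h, ?_⟩⟩
          intro u hu hzu
          by_cases hux : u = x
          · exact hux.ge
          · exact absurd (D2.1 u (Finset.mem_erase.2 ⟨hux, hu⟩)) (not_le.2 hzu)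
      · have hσ'z : (Equiv.swap x (σ x) * σ) z = σ z := detach_apply_of_ne hzx hσzx
        rw [hσ'z] at hD0
        have hσzB : σ z ∈ orbitF σ z := apply_mem_orbitF
        have hwnez : σ x ≠ σ z := fun h => hzx (σ.injective h).symm
        obtain ⟨hwB', D⟩ := hD0
        obtain ⟨hwS, E⟩ := hiso
        rcases D with D1 | D2
        · refine ⟨hσzB, Or.inl ⟨D1.1, ?_⟩⟩
          intro u hu hzu
          by_cases hux : u = x
          · rw [hux] at hzu ⊢
            by_contra hc
            push_neg at hc
            rcases E with E1 | E2
            · have h1 : σ x ≤ σ z := E1.2 (σ z) (hBs hσzB) hc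
              have h2 : σ z ≤ σ x :=
                D1.2 (σ x) (Finset.mem_erase.2 ⟨hx, hwB⟩) (hzu.trans E1.1)
              exact hwnez (le_antisymm h1 h2)
            · exact absurd (E2.1 (σ z) (hBs hσzB)) (not_le.2 hc)
          · exact D1.2 u (Finset.mem_erase.2 ⟨hux, hu⟩) hzu
        · rcases lt_trichotomy x z with h | h | h
          · refine ⟨hσzB, Or.inr ⟨?_, ?_⟩⟩
            · intro u hu
              by_cases hux : u = x
              · exact hux ▸ h.le
              · exact D2.1 u (Finset.mem_erase.2 ⟨hux, hu⟩)
            · intro u hu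
              by_cases hux : u = x
              · rw [hux]
                by_contra hc
                push_neg at hc
                rcases E with E1 | E2
                · have h1 : σ x ≤ σ z := E1.2 (σ z) (hBs hσzB) hc
                  have h2 : σ z ≤ σ x := D2.2 (σ x) (Finset.mem_erase.2 ⟨hx, hwB⟩)
                  exact hwnez (le_antisymm h1 h2)
                · exact absurd (E2.1 (σ z) (hBs hσzB)) (not_le.2 hc)
              · exact D2.2 u (Finset.mem_erase.2 ⟨hux, hu⟩)
          · exact absurd h.symm hzx
          · exfalso
            rcases E with E1 | E2
            · exact absurd (E1.1.trans_le (D2.1 (σ x) (Finset.mem_erase.2 ⟨hx, hwB⟩)))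
                (asymm h)
            · have h1 : σ x ≤ σ z := E2.2 (σ z) (hBs hσzB)
              have h2 : σ z ≤ σ x := D2.2 (σ x) (Finset.mem_erase.2 ⟨hx, hwB⟩)
              exact hwnez (le_antisymm h1 h2)
    · have hσzx : σ z ≠ x := fun h => hzo ⟨1, by simpa using h⟩
      have horb : orbitF (Equiv.swap x (σ x) * σ) z = orbitF σ z := by
        rw [detach_orbitF hx hzx,
          Finset.erase_eq_of_notMem (fun hc => hzo (mem_orbitF.1 hc))]
      have hD := hInc' z
      rw [horb, detach_apply_of_ne hzx hσzx] at hD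
      exact hD

lemma attach_NCr (hsupp : ∀ y, σ y ≠ y → y ∈ s) (hx : σ x ≠ x)
    (hiso : IsSucc s x (σ x)) (hN : NCr (Equiv.swap x (σ x) * σ)) : NCr σ := by
  rintro ⟨a, b, c, d, hab, hbc, hcd, hac, hbd, hnab⟩
  have hmem : ∀ u v : Fin p, σ.SameCycle u v → u ≠ v → u ∈ s := fun u v h hne =>
    hsupp u (fun hc => hne ((sameCycle_fixed hc).1 h).symm)
  have hacne : a ≠ c := ne_of_lt (hab.trans hbc)
  have hbdne : b ≠ d := ne_of_lt (hbc.trans hcd)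
  have has : a ∈ s := hmem a c hac hacne
  have hcs : c ∈ s := hmem c a hac.symm hacne.symm
  have hbs : b ∈ s := hmem b d hbd hbdne
  have hds : d ∈ s := hmem d b hbd.symm hbdne.symm
  have hxw : σ.SameCycle x (σ x) := ⟨1, by simp⟩
  have T : ∀ u v : Fin p, u ≠ x → v ≠ x → σ.SameCycle u v →
      (Equiv.swap x (σ x) * σ).SameCycle u v := fun u v hu hv h =>
    (detach_sameCycle hx hu hv).2 h
  have T' : ∀ u v : Fin p, u ≠ x → v ≠ x → (Equiv.swap x (σ x) * σ).SameCycle u v →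
      σ.SameCycle u v := fun u v hu hv h => (detach_sameCycle hx hu hv).1 h
  by_cases hax : a = x
  · subst hax
    rcases hiso.2 with E1 | E2
    · have hwb : σ a ≤ b := E1.2 b hbs hab
      have hwnb : σ a ≠ b := fun h => hnab ⟨1, by simpa using h⟩
      have hbne : b ≠ a := ne_of_gt hab
      have hcne : c ≠ a := ne_of_gt (hab.trans hbc)
      have hdne : d ≠ a := ne_of_gt ((hab.trans hbc).trans hcd)
      have hwne : σ a ≠ a := hx
      refine hN ⟨σ a, b, c, d, lt_of_le_of_ne hwb hwnb, hbc, hcd, ?_, ?_, ?_⟩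
      · exact T _ _ hwne hcne (hxw.symm.trans hac)
      · exact T _ _ hbne hdne hbd
      · exact fun h => hnab (hxw.trans (T' _ _ hwne hbne h))
    · exact absurd (E2.1 b hbs) (not_le.2 hab)
  by_cases hbx : b = x
  · subst hbx
    rcases hiso.2 with E1 | E2
    · have hwc : σ b ≤ c := E1.2 c hcs hbc
      have hwnc : σ b ≠ c := by
        intro h
        have h1 : σ.SameCycle b c := ⟨1, by simpa using h⟩
        exact hnab (hac.trans h1.symm)
      have hane : a ≠ b := ne_of_lt hab
      have hcne : c ≠ b := ne_of_gt hbc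
      have hdne : d ≠ b := ne_of_gt (hbc.trans hcd)
      have hwne : σ b ≠ b := hx
      have hawlt : a < σ b := hab.trans E1.1
      refine hN ⟨a, σ b, c, d, hawlt, lt_of_le_of_ne hwc hwnc, hcd, ?_, ?_, ?_⟩
      · exact T _ _ hane hcne hac
      · exact T _ _ hwne hdne (hxw.symm.trans hbd)
      · exact fun h => hnab ((T' _ _ hane hwne h).trans hxw.symm)
    · exact absurd (E2.1 c hcs) (not_le.2 hbc)
  by_cases hcx : c = x
  · subst hcx
    rcases hiso.2 with E1 | E2
    · have hwd : σ c ≤ d := E1.2 d hds hcd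
      have hwnd : σ c ≠ d := by
        intro h
        have h1 : σ.SameCycle c d := ⟨1, by simpa using h⟩
        exact hnab (hac.trans (h1.trans hbd.symm))
      have hane : a ≠ c := hacne
      have hbne : b ≠ c := ne_of_lt hbc
      have hdne : d ≠ c := ne_of_gt hcd
      have hwne : σ c ≠ c := hx
      have hbwlt : b < σ c := hbc.trans E1.1
      refine hN ⟨a, b, σ c, d, hab, hbwlt, lt_of_le_of_ne hwd hwnd, ?_, ?_, ?_⟩
      · exact T _ _ hane hwne (hac.trans hxw)
      · exact T _ _ hbne hdne hbd
      · exact fun h => hnab (T' _ _ hane hbne h)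
    · exact absurd (E2.1 d hds) (not_le.2 hcd)
  by_cases hdx : d = x
  · subst hdx
    have hane : a ≠ d := ne_of_lt ((hab.trans hbc).trans hcd)
    have hbne : b ≠ d := hbdne
    have hcne : c ≠ d := ne_of_lt hcd
    have hwne : σ d ≠ d := hx
    rcases hiso.2 with E1 | E2
    · have hcw : c < σ d := hcd.trans E1.1
      refine hN ⟨a, b, c, σ d, hab, hbc, hcw, ?_, ?_, ?_⟩
      · exact T _ _ hane hcne hac
      · exact T _ _ hbne hwne (hbd.trans hxw)
      · exact fun h => hnab (T' _ _ hane hbne h)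
    · have hwa : σ d ≤ a := E2.2 a has
      have hwna : σ d ≠ a := by
        intro h
        have h1 : σ.SameCycle d a := ⟨1, by simpa using h⟩
        exact hnab (h1.symm.trans hbd.symm)
      refine hN ⟨σ d, a, b, c, lt_of_le_of_ne hwa hwna, hab, hbc, ?_, ?_, ?_⟩
      · exact T _ _ hwne hbne (hxw.symm.trans hbd.symm)
      · exact T _ _ hane hcne hac
      · exact fun h => hnab (((T' _ _ hwne hane h).symm.trans hxw.symm).trans hbd.symm)
  · exact hN ⟨a, b, c, d, hab, hbc, hcd, T _ _ hax hcx hac, T _ _ hbx hdx hbd,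
      fun h => hnab (T' _ _ hax hbx h)⟩

end Attach

section Master

variable {p : ℕ} {σ : Equiv.Perm (Fin p)} {x : Fin p} {s : Finset (Fin p)}

lemma incCycle_ne_self (h2 : 2 ≤ s.card) (hx : x ∈ s) : incCycle s x ≠ x := by
  intro h
  have hS := isSucc_incCycle hx
  rw [h] at hS
  rcases hS.2 with h1 | h1
  · exact lt_irrefl x h1.1
  · have hall : ∀ z ∈ s, z = x := fun z hz => le_antisymm (h1.1 z hz) (h1.2 z hz)
    have : s.card ≤ 1 := Finset.card_le_one.2 fun a ha b hb => (hall a ha).trans (hall b hb).symm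
    omega

lemma incCycle_erase (hx : x ∈ s) :
    incCycle (s.erase x) = Equiv.swap x (incCycle s x) * incCycle s := by
  apply Equiv.ext
  intro y
  by_cases hys : y ∈ s
  · by_cases hyx : y = x
    · subst hyx
      rw [incCycle_apply_of_not_mem (Finset.notMem_erase y s), Equiv.Perm.mul_apply,
        Equiv.swap_apply_right]
    · have hy' : y ∈ s.erase x := Finset.mem_erase.2 ⟨hyx, hys⟩
      have h2 : 2 ≤ s.card := Finset.one_lt_card.2 ⟨y, hys, x, hx, hyx⟩
      have hcxne : incCycle s x ≠ x := incCycle_ne_self h2 hx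
      by_cases hcy : incCycle s y = x
      · have hRHS : (Equiv.swap x (incCycle s x) * incCycle s) y = incCycle s x := by
          rw [Equiv.Perm.mul_apply, hcy, Equiv.swap_apply_left]
        rw [hRHS]
        have h1 : IsSucc s y x := by
          have := isSucc_incCycle hys; rwa [hcy] at this
        have hSucc : IsSucc (s.erase x) y (incCycle s x) :=
          h1.comp_erase (isSucc_incCycle hx) hcxne
        exact (isSucc_incCycle hy').unique hSucc
      · have hcc : incCycle s y ≠ incCycle s x := fun h =>
          hyx ((incCycle s).injective h)
        have hRHS : (Equiv.swap x (incCycle s x) * incCycle s) y = incCycle s y := by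
          rw [Equiv.Perm.mul_apply, Equiv.swap_apply_of_ne_of_ne hcy hcc]
        rw [hRHS]
        have hSucc : IsSucc (s.erase x) y (incCycle s y) :=
          (isSucc_incCycle hys).mono (Finset.erase_subset _ _)
            (Finset.mem_erase.2 ⟨hcy, incCycle_mem hys⟩)
        exact (isSucc_incCycle hy').unique hSucc
  · have hy' : y ∉ s.erase x := fun h => hys (Finset.mem_of_mem_erase h)
    rw [incCycle_apply_of_not_mem hy', Equiv.Perm.mul_apply, incCycle_apply_of_not_mem hys,
      Equiv.swap_apply_of_ne_of_ne (fun h => hys (by rw [h]; exact hx))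
        (fun h => hys (by rw [h]; exact incCycle_mem hx))]

lemma eq_one_of_supp_singleton (hsupp : ∀ y, σ y ≠ y → y ∈ ({x} : Finset (Fin p))) :
    σ = 1 := by
  have hσx : σ x = x := by
    by_contra h
    have h1 := Finset.mem_singleton.1 (hsupp x h)
    have h2 : σ (σ x) ≠ σ x := fun hc => h (σ.injective hc)
    have h3 := Finset.mem_singleton.1 (hsupp (σ x) h2)
    exact h h3
  refine Equiv.ext fun y => ?_
  rw [Equiv.Perm.one_apply]
  by_contra h
  have := Finset.mem_singleton.1 (hsupp y h)
  subst this
  exact h hσx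

/-- counting bound when no fixed points exist in `s`. -/
lemma myC_bound_of_no_fixed (hsupp : ∀ y, σ y ≠ y → y ∈ s)
    (hnf : ∀ y ∈ s, σ y ≠ y) : 2 * myC σ + s.card ≤ 2 * p := by
  classical
  set Mi := Mins σ ∩ s with hMi
  set Mo := Mins σ \ s with hMo
  have hsplit : Mi.card + Mo.card = myC σ := by
    rw [hMi, hMo, Finset.card_inter_add_card_sdiff]
    rfl
  have hMisub : Mi ⊆ s := Finset.inter_subset_right
  have hinj : ∀ z ∈ Mi, σ z ∈ s \ Mi := by
    intro z hz
    obtain ⟨hzM, hzs⟩ := Finset.mem_inter.1 hz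
    have hσz : σ z ≠ z := hnf z hzs
    have hσzs : σ z ∈ s := hsupp (σ z) (fun hc => hσz (σ.injective hc))
    refine Finset.mem_sdiff.2 ⟨hσzs, ?_⟩
    intro hc
    obtain ⟨hcM, _⟩ := Finset.mem_inter.1 hc
    have h1 : z ≤ σ z := (mem_Mins.1 hzM) (σ z) ⟨1, by simp⟩
    have h2 : σ z ≤ z := (mem_Mins.1 hcM) z ⟨-1, by simp⟩
    exact hσz (le_antisymm h2 h1)
  have hcard1 : Mi.card ≤ (s \ Mi).card := by
    apply Finset.card_le_card_of_injOn σ hinj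
    intro a _ b _ hab
    exact σ.injective hab
  have hcard2 : (s \ Mi).card = s.card - Mi.card := Finset.card_sdiff_of_subset hMisub
  have hMic : Mi.card ≤ s.card := Finset.card_le_card hMisub
  have hcard3 : Mo.card ≤ p - s.card := by
    have hsub : Mo ⊆ univ \ s := fun z hz =>
      Finset.mem_sdiff.2 ⟨mem_univ _, (Finset.mem_sdiff.1 hz).2⟩
    have := Finset.card_le_card hsub
    rwa [Finset.card_sdiff_of_subset (Finset.subset_univ s), Finset.card_univ, Fintype.card_fin] at this
  have hsc : s.card ≤ p := by
    have := Finset.card_le_card (Finset.subset_univ s)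
    rwa [Finset.card_univ, Fintype.card_fin] at this
  omega

/-- existence of `x ∈ s` with `σ x` the `s`-successor, given Inc + NC + no fixed points. -/
lemma exists_adjacent (hsupp : ∀ y, σ y ≠ y → y ∈ s) (hnf : ∀ y ∈ s, σ y ≠ y)
    (hne : s.Nonempty) (hInc : Inc σ) (hN : NCr σ) :
    ∃ x ∈ s, σ x = incCycle s x ∧ σ x ≠ x := by
  classical
  obtain ⟨x₁, hx₁s, hmin⟩ := Finset.exists_min_image s
    (fun x => ((orbitF σ x).max' (orbitF_nonempty σ x)).val -
      ((orbitF σ x).min' (orbitF_nonempty σ x)).val) hne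
  set B := orbitF σ x₁ with hB
  set bm := B.min' (orbitF_nonempty σ x₁) with hbm
  set bM := B.max' (orbitF_nonempty σ x₁) with hbM
  have hBs : B ⊆ s := fun u hu =>
    mem_of_sameCycle_nontrivial hsupp (hnf x₁ hx₁s) (mem_orbitF.1 hu)
  have hx₁B : x₁ ∈ B := self_mem_orbitF
  have hσx₁B : σ x₁ ∈ B := apply_mem_orbitF
  have hbmB : bm ∈ B := Finset.min'_mem _ _
  have hbMB : bM ∈ B := Finset.max'_mem _ _
  have hlt : bm < bM := by
    rcases lt_or_ge bm bM with h | h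
    · exact h
    · exfalso
      have hall : ∀ u ∈ B, u = bm := fun u hu =>
        le_antisymm ((Finset.le_max' _ _ hu).trans h) (Finset.min'_le _ _ hu)
      exact hnf x₁ hx₁s ((hall (σ x₁) hσx₁B).trans (hall x₁ hx₁B).symm)
  have hbmbM : σ.SameCycle bm bM := (mem_orbitF.1 hbmB).symm.trans (mem_orbitF.1 hbMB)
  have hint : ∀ u ∈ s, bm ≤ u → u ≤ bM → u ∈ B := by
    intro u hus hbmu hubM
    by_contra huB
    have hubm : u ≠ bm := fun h => huB (h ▸ hbmB)
    have hubM' : u ≠ bM := fun h => huB (h ▸ hbMB)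
    have hno : ∀ v, σ.SameCycle u v → ¬ σ.SameCycle x₁ v := by
      intro v huv hx₁v
      exact huB (mem_orbitF.2 (hx₁v.trans huv.symm))
    have hvB : ∀ v, σ.SameCycle u v → bm < v ∧ v < bM := by
      intro v huv
      constructor
      · rcases lt_trichotomy v bm with h | h | h
        · exfalso
          refine hN ⟨v, bm, u, bM, h, lt_of_le_of_ne hbmu (Ne.symm hubm),
            lt_of_le_of_ne hubM hubM', huv.symm, hbmbM, ?_⟩
          intro hc
          exact hno bm (huv.trans hc) (mem_orbitF.1 hbmB)
        · exfalso
          apply hno v huv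
          rw [h]
          exact mem_orbitF.1 hbmB
        · exact h
      · rcases lt_trichotomy v bM with h | h | h
        · exact h
        · exfalso
          apply hno v huv
          rw [h]
          exact mem_orbitF.1 hbMB
        · exfalso
          refine hN ⟨bm, u, bM, v, lt_of_le_of_ne hbmu (Ne.symm hubm),
            lt_of_le_of_ne hubM hubM', h, hbmbM, huv, ?_⟩
          intro hc
          exact hno u (Equiv.Perm.SameCycle.refl _ _) ((mem_orbitF.1 hbmB).trans hc)
    set C := orbitF σ u with hC
    have hCmin := hvB (C.min' (orbitF_nonempty σ u)) (mem_orbitF.1 (Finset.min'_mem _ _))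
    have hCmax := hvB (C.max' (orbitF_nonempty σ u)) (mem_orbitF.1 (Finset.max'_mem _ _))
    have hmm := hmin u hus
    simp only [← hB, ← hC, ← hbm, ← hbM] at hmm
    have v1 : bm.val < (C.min' (orbitF_nonempty σ u)).val := hCmin.1
    have v2 : (C.max' (orbitF_nonempty σ u)).val < bM.val := hCmax.2
    omega
  -- conclude with x := bm
  have horb : orbitF σ bm = B := (orbitF_eq_of_sameCycle (mem_orbitF.1 hbmB)).symm
  have hIs : IsSucc B bm (σ bm) := by
    have := hInc bm; rwa [horb] at this
  rcases hIs.2 with G1 | G2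
  · have hsbm : σ bm ∈ B := hIs.1
    have hiso : IsSucc s bm (σ bm) := by
      refine ⟨hBs hsbm, Or.inl ⟨G1.1, ?_⟩⟩
      intro z hz hbz
      by_contra hc
      push_neg at hc
      have hzB : z ∈ B := hint z hz hbz.le (hc.le.trans (Finset.le_max' _ _ hsbm))
      exact absurd (G1.2 z hzB hbz) (not_le.2 hc)
    exact ⟨bm, hBs hbmB, hiso.unique (isSucc_incCycle (hBs hbmB)), hnf bm (hBs hbmB)⟩
  · exact absurd (G2.1 bM hbMB) (not_le.2 hlt)

/-- surgery on `σ⁻¹ * incCycle s` when `x` is a fixed point of `σ`. -/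
lemma fixed_conj (hσx : σ x = x) (hxs : x ∈ s) (h2 : 2 ≤ s.card) :
    myC (σ⁻¹ * incCycle (s.erase x)) = myC (σ⁻¹ * incCycle s) + 1 := by
  have hcx : incCycle s x ≠ x := incCycle_ne_self h2 hxs
  rw [incCycle_erase hxs, ← mul_assoc, Equiv.mul_swap_eq_swap_mul, mul_assoc]
  have hinvx : σ⁻¹ x = x := by
    conv_lhs => rw [← hσx, Equiv.Perm.inv_apply_self]
  rw [hinvx]
  set ρ := σ⁻¹ * incCycle s with hρ
  have hρx : ρ x = σ⁻¹ (incCycle s x) := by rw [hρ, Equiv.Perm.mul_apply]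
  have hscyc : ρ.SameCycle x (σ⁻¹ (incCycle s x)) := ⟨1, by simpa using hρx⟩
  have hne : x ≠ σ⁻¹ (incCycle s x) := by
    intro h
    apply hcx
    have := congrArg σ h
    rw [Equiv.Perm.apply_inv_self] at this
    rw [← this, hσx]
  exact split_myC_left hne hscyc

/-- surgery on `σ⁻¹ * incCycle s` when `σ x` is the `s`-successor of `x`. -/
lemma detach_conj (hxs : x ∈ s) (hcx : σ x = incCycle s x) :
    (Equiv.swap x (σ x) * σ)⁻¹ * incCycle (s.erase x) = σ⁻¹ * incCycle s := by
  rw [incCycle_erase hxs, ← hcx, mul_inv_rev, Equiv.swap_inv, mul_assoc,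
    ← mul_assoc (Equiv.swap x (σ x)), Equiv.swap_mul_self, one_mul]

/-- Master lemma, direction (Inc ∧ NC) → counting equality. -/
lemma master_mpr (n : ℕ) :
    ∀ (s : Finset (Fin p)) (σ : Equiv.Perm (Fin p)), s.card = n → s.Nonempty →
      (∀ y, σ y ≠ y → y ∈ s) → Inc σ → NCr σ →
      myC σ + myC (σ⁻¹ * incCycle s) + s.card = 2 * p + 1 := by
  induction n using Nat.strong_induction_on with
  | _ n ih =>
    intro s σ hcard hne hsupp hInc hN
    rcases Nat.lt_or_ge n 2 with h2 | h2
    · have h1 : s.card = 1 := by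
        have := Finset.card_pos.2 hne; omega
      obtain ⟨x, rfl⟩ := Finset.card_eq_one.1 h1
      have hσ1 : σ = 1 := eq_one_of_supp_singleton hsupp
      subst hσ1
      rw [incCycle_singleton, inv_one, one_mul, myC_one, Finset.card_singleton]
      omega
    · by_cases hfix : ∃ x ∈ s, σ x = x
      · obtain ⟨x, hxs, hσx⟩ := hfix
        have hc' : (s.erase x).card = n - 1 := by
          rw [Finset.card_erase_of_mem hxs, hcard]
        have hne' : (s.erase x).Nonempty := Finset.card_pos.1 (by omega)
        have hsupp' : ∀ y, σ y ≠ y → y ∈ s.erase x := fun y hy =>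
          Finset.mem_erase.2 ⟨fun h => hy (h ▸ hσx), hsupp y hy⟩
        have hIH := ih (n-1) (by omega) (s.erase x) σ hc' hne' hsupp' hInc hN
        have hkey := fixed_conj hσx hxs (by omega)
        omega
      · push_neg at hfix
        obtain ⟨x, hxs, hcx_eq, hσx_ne⟩ := exists_adjacent hsupp hfix hne hInc hN
        have hc' : (s.erase x).card = n - 1 := by
          rw [Finset.card_erase_of_mem hxs, hcard]
        have hne' : (s.erase x).Nonempty := Finset.card_pos.1 (by omega)
        have hIH := ih (n-1) (by omega) (s.erase x) (Equiv.swap x (σ x) * σ) hc' hne'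
          (detach_suppIn hsupp hσx_ne) (detach_Inc hσx_ne hInc) (detach_NCr hσx_ne hN)
        rw [detach_conj hxs hcx_eq, detach_myC hσx_ne] at hIH
        omega

/-- Master lemma, direction counting equality → (Inc ∧ NC). -/
lemma master_mp (n : ℕ) :
    ∀ (s : Finset (Fin p)) (σ : Equiv.Perm (Fin p)), s.card = n → s.Nonempty →
      (∀ y, σ y ≠ y → y ∈ s) →
      myC σ + myC (σ⁻¹ * incCycle s) + s.card = 2 * p + 1 → Inc σ ∧ NCr σ := by
  induction n using Nat.strong_induction_on with
  | _ n ih =>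
    intro s σ hcard hne hsupp heq
    rcases Nat.lt_or_ge n 2 with h2 | h2
    · have h1 : s.card = 1 := by
        have := Finset.card_pos.2 hne; omega
      obtain ⟨x, rfl⟩ := Finset.card_eq_one.1 h1
      have hσ1 : σ = 1 := eq_one_of_supp_singleton hsupp
      subst hσ1
      exact ⟨inc_one, ncr_one⟩
    · by_cases hfix : ∃ x ∈ s, σ x = x
      · obtain ⟨x, hxs, hσx⟩ := hfix
        have hc' : (s.erase x).card = n - 1 := by
          rw [Finset.card_erase_of_mem hxs, hcard]
        have hne' : (s.erase x).Nonempty := Finset.card_pos.1 (by omega)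
        have hsupp' : ∀ y, σ y ≠ y → y ∈ s.erase x := fun y hy =>
          Finset.mem_erase.2 ⟨fun h => hy (h ▸ hσx), hsupp y hy⟩
        have hkey := fixed_conj hσx hxs (by omega)
        exact ih (n-1) (by omega) (s.erase x) σ hc' hne' hsupp' (by omega)
      · push_neg at hfix
        by_cases hfix2 : ∃ x ∈ s, σ x = incCycle s x
        · obtain ⟨x, hxs, hcx_eq⟩ := hfix2
          have hσx_ne : σ x ≠ x := hfix x hxs
          have hc' : (s.erase x).card = n - 1 := by
            rw [Finset.card_erase_of_mem hxs, hcard]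
          have hne' : (s.erase x).Nonempty := Finset.card_pos.1 (by omega)
          have heq' : myC (Equiv.swap x (σ x) * σ) +
              myC ((Equiv.swap x (σ x) * σ)⁻¹ * incCycle (s.erase x)) + (s.erase x).card
                = 2 * p + 1 := by
            rw [detach_conj hxs hcx_eq, detach_myC hσx_ne, hc']
            omega
          obtain ⟨hInc', hN'⟩ := ih (n-1) (by omega) (s.erase x) (Equiv.swap x (σ x) * σ)
            hc' hne' (detach_suppIn hsupp hσx_ne) heq'
          have hiso : IsSucc s x (σ x) := by
            rw [hcx_eq]; exact isSucc_incCycle hxs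
          exact ⟨attach_Inc hsupp hσx_ne hiso hInc',
            attach_NCr hsupp hσx_ne hiso hN'⟩
        · exfalso
          push_neg at hfix2
          have hsupp2 : ∀ y, (σ⁻¹ * incCycle s) y ≠ y → y ∈ s := by
            intro y hy
            by_contra hys
            apply hy
            rw [Equiv.Perm.mul_apply, incCycle_apply_of_not_mem hys]
            have : σ y = y := by
              by_contra hc
              exact hys (hsupp y hc)
            conv_lhs => rw [← this, Equiv.Perm.inv_apply_self]
          have hnf2 : ∀ y ∈ s, (σ⁻¹ * incCycle s) y ≠ y := by
            intro y hys hy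
            apply hfix2 y hys
            have := congrArg σ hy
            rw [Equiv.Perm.mul_apply, Equiv.Perm.apply_inv_self] at this
            exact this.symm
          have hb1 := myC_bound_of_no_fixed hsupp hfix
          have hb2 := myC_bound_of_no_fixed hsupp2 hnf2
          omega

end Master

section Restrict

variable {p : ℕ}

/-- restriction of a permutation to an invariant finset (identity outside). -/
def resP (π : Equiv.Perm (Fin p)) (B : Finset (Fin p)) (hinv : ∀ y, y ∈ B ↔ π y ∈ B) :
    Equiv.Perm (Fin p) :=
  Equiv.Perm.ofSubtype (π.subtypePerm (fun y => (hinv y).symm))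

variable {π : Equiv.Perm (Fin p)} {B : Finset (Fin p)} {hinv : ∀ y, y ∈ B ↔ π y ∈ B}

lemma resP_apply_mem {y : Fin p} (hy : y ∈ B) : resP π B hinv y = π y := by
  rw [resP, Equiv.Perm.ofSubtype_apply_of_mem _ hy, Equiv.Perm.subtypePerm_apply]

lemma resP_apply_not_mem {y : Fin p} (hy : y ∉ B) : resP π B hinv y = y :=
  Equiv.Perm.ofSubtype_apply_of_not_mem _ hy

lemma resP_pow {u : Fin p} (hu : u ∈ B) (n : ℕ) :
    ((resP π B hinv) ^ n) u = (π ^ n) u ∧ (π ^ n) u ∈ B := by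
  induction n with
  | zero => exact ⟨rfl, hu⟩
  | succ n ih =>
    obtain ⟨ih1, ih2⟩ := ih
    constructor
    · rw [pow_succ', pow_succ', Equiv.Perm.mul_apply, Equiv.Perm.mul_apply, ih1,
        resP_apply_mem ih2]
    · rw [pow_succ', Equiv.Perm.mul_apply]
      exact (hinv _).1 ih2

lemma resP_sameCycle {u v : Fin p} (hu : u ∈ B) :
    (resP π B hinv).SameCycle u v ↔ π.SameCycle u v := by
  rw [sameCycle_nat, sameCycle_nat]
  constructor
  · rintro ⟨n, rfl⟩; exact ⟨n, ((resP_pow hu n).1).symm⟩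
  · rintro ⟨n, rfl⟩; exact ⟨n, (resP_pow hu n).1⟩

lemma resP_sameCycle_not_mem {u v : Fin p} (hu : u ∉ B) :
    (resP π B hinv).SameCycle u v ↔ v = u :=
  sameCycle_fixed (resP_apply_not_mem hu)

lemma resP_Mins : Mins (resP π B hinv) = (Mins π ∩ B) ∪ (univ \ B) := by
  ext z
  by_cases hz : z ∈ B
  · simp only [Finset.mem_union, Finset.mem_inter, Finset.mem_sdiff, mem_univ, true_and, hz,
      and_true, not_true_eq_false, or_false]
    rw [mem_Mins, mem_Mins]
    constructor
    · intro h y hy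
      exact h y ((resP_sameCycle hz).2 hy)
    · intro h y hy
      exact h y ((resP_sameCycle hz).1 hy)
  · simp only [Finset.mem_union, Finset.mem_inter, Finset.mem_sdiff, mem_univ, true_and, hz,
      and_false, false_or, not_false_eq_true, iff_true]
    rw [mem_Mins]
    intro y hy
    rw [(resP_sameCycle_not_mem hz).1 hy]

lemma resP_myC : myC (resP π B hinv) + B.card = (Mins π ∩ B).card + p := by
  have hdisj : Disjoint (Mins π ∩ B) (univ \ B) := by
    rw [Finset.disjoint_left]
    intro z hz hz'
    exact (Finset.mem_sdiff.1 hz').2 (Finset.mem_inter.1 hz).2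
  have hBcard : B.card ≤ p := by
    have := Finset.card_le_card (Finset.subset_univ B)
    rwa [Finset.card_univ, Fintype.card_fin] at this
  have : myC (resP π B hinv) = (Mins π ∩ B).card + (p - B.card) := by
    rw [myC, resP_Mins, Finset.card_union_of_disjoint hdisj,
      Finset.card_sdiff_of_subset (Finset.subset_univ B), Finset.card_univ, Fintype.card_fin]
  omega

lemma resP_Inc (hI : Inc π) : Inc (resP π B hinv) := by
  intro z
  by_cases hz : z ∈ B
  · have horb : orbitF (resP π B hinv) z = orbitF π z := by
      ext u
      rw [mem_orbitF, mem_orbitF, resP_sameCycle hz]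
    rw [horb, resP_apply_mem hz]
    exact hI z
  · exact isSucc_fixed (resP_apply_not_mem hz)

lemma resP_NCr (hN : NCr π) : NCr (resP π B hinv) := by
  rintro ⟨a, b, c, d, hab, hbc, hcd, hac, hbd, hnab⟩
  have haB : a ∈ B := by
    by_contra h
    exact absurd ((resP_sameCycle_not_mem h).1 hac) (ne_of_gt (hab.trans hbc))
  have hbB : b ∈ B := by
    by_contra h
    exact absurd ((resP_sameCycle_not_mem h).1 hbd) (ne_of_gt (hbc.trans hcd))
  exact hN ⟨a, b, c, d, hab, hbc, hcd, (resP_sameCycle haB).1 hac,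
    (resP_sameCycle hbB).1 hbd, fun h => hnab ((resP_sameCycle haB).2 h)⟩

lemma sum_inter_orbit (τ : Equiv.Perm (Fin p)) (A : Finset (Fin p)) :
    ∑ m ∈ Mins τ, (A ∩ orbitF τ m).card = A.card := by
  classical
  rw [← Finset.card_biUnion]
  · congr 1
    ext z
    simp only [Finset.mem_biUnion, Finset.mem_inter, mem_orbitF]
    constructor
    · rintro ⟨m, _, hz, _⟩; exact hz
    · intro hz
      exact ⟨(orbitF τ z).min' (orbitF_nonempty τ z), min'_orbitF_mem_Mins τ z, hz,
        (mem_orbitF.1 (Finset.min'_mem _ _)).symm⟩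
  · intro m hm m' hm' hne
    rw [Function.onFun, Finset.disjoint_left]
    rintro z hz hz'
    obtain ⟨_, hzm⟩ := Finset.mem_inter.1 hz
    obtain ⟨_, hzm'⟩ := Finset.mem_inter.1 hz'
    have h1 : τ.SameCycle m m' := (mem_orbitF.1 hzm).trans (mem_orbitF.1 hzm').symm
    exact hne (le_antisymm ((mem_Mins.1 hm) m' h1) ((mem_Mins.1 hm') m h1.symm))

lemma incCycle_univ : incCycle (univ : Finset (Fin p)) = finRotate p := by
  cases p with
  | zero => exact Subsingleton.elim _ _
  | succ n =>
    apply Equiv.ext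
    intro x
    have h1 : IsSucc univ x (incCycle univ x) := isSucc_incCycle (mem_univ x)
    have h2 : IsSucc univ x (finRotate (n+1) x) := by
      rw [finRotate_succ_apply]
      by_cases hx : x = Fin.last n
      · subst hx
        rw [Fin.last_add_one]
        exact ⟨mem_univ _, Or.inr ⟨fun z _ => Fin.le_last z, fun z _ => Fin.zero_le z⟩⟩
      · have hlt : x < Fin.last n := lt_of_le_of_ne (Fin.le_last x) hx
        have hval : (x + 1).val = x.val + 1 := Fin.val_add_one_of_lt hlt
        refine ⟨mem_univ _, Or.inl ⟨?_, ?_⟩⟩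
        · rw [Fin.lt_def, hval]; omega
        · intro z _ hz
          rw [Fin.le_def, hval]
          rw [Fin.lt_def] at hz
          omega
    exact h1.unique h2

/-- Key step: for geodesic σ, τ with `[σ] ≤ [τ]`, the length identity holds. -/
lemma geodesic_chain_step (hp : 1 ≤ p) {σ τ : Equiv.Perm (Fin p)}
    (hσ : myC σ + myC (σ⁻¹ * finRotate p) = p + 1)
    (hτ : myC τ + myC (τ⁻¹ * finRotate p) = p + 1)
    (hle : ∀ u v : Fin p, σ.SameCycle u v → τ.SameCycle u v) :
    myC σ + myC (σ⁻¹ * τ) = p + myC τ := by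
  classical
  have hcard_univ : (univ : Finset (Fin p)).card = p := by simp
  have hne : (univ : Finset (Fin p)).Nonempty := ⟨⟨0, hp⟩, mem_univ _⟩
  have hγ : incCycle (univ : Finset (Fin p)) = finRotate p := incCycle_univ
  obtain ⟨hIσ, hNσ⟩ := master_mp p univ σ hcard_univ hne (fun y _ => mem_univ y)
    (by rw [hγ]; omega)
  obtain ⟨hIτ, hNτ⟩ := master_mp p univ τ hcard_univ hne (fun y _ => mem_univ y)
    (by rw [hγ]; omega)
  set ρ := σ⁻¹ * τ with hρ
  have key : ∀ m ∈ Mins τ,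
      (Mins σ ∩ orbitF τ m).card + (Mins ρ ∩ orbitF τ m).card = (orbitF τ m).card + 1 := by
    intro m hm
    set B := orbitF τ m with hB
    have hinvτ : ∀ y, y ∈ B ↔ τ y ∈ B := by
      intro y
      rw [hB, mem_orbitF, mem_orbitF, Equiv.Perm.sameCycle_apply_right]
    have hστ : ∀ y, τ.SameCycle y (σ y) := fun y => hle y (σ y) ⟨1, by simp⟩
    have hinvσ : ∀ y, y ∈ B ↔ σ y ∈ B := by
      intro y
      rw [hB, mem_orbitF, mem_orbitF]
      exact ⟨fun h => h.trans (hστ y), fun h => h.trans (hστ y).symm⟩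
    have hinvσ' : ∀ z, σ⁻¹ z ∈ B ↔ z ∈ B := by
      intro z
      rw [hinvσ (σ⁻¹ z), Equiv.Perm.apply_inv_self]
    have hinvρ : ∀ y, y ∈ B ↔ ρ y ∈ B := by
      intro y
      rw [hρ, Equiv.Perm.mul_apply, hinvσ' (τ y)]
      exact hinvτ y
    have hmB : m ∈ B := self_mem_orbitF
    have hBne : B.Nonempty := ⟨m, hmB⟩
    have claim1 : resP τ B hinvτ = incCycle B := by
      apply Equiv.ext
      intro y
      by_cases hy : y ∈ B
      · rw [resP_apply_mem hy]
        have horb : orbitF τ y = B := by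
          rw [hB]
          exact (orbitF_eq_of_sameCycle (mem_orbitF.1 hy)).symm
        have h1 : IsSucc B y (τ y) := by
          have := hIτ y; rwa [horb] at this
        exact h1.unique (isSucc_incCycle hy)
      · rw [resP_apply_not_mem hy, incCycle_apply_of_not_mem hy]
    have claim2 : (resP σ B hinvσ)⁻¹ * incCycle B = resP ρ B hinvρ := by
      apply Equiv.ext
      intro y
      rw [Equiv.Perm.mul_apply]
      by_cases hy : y ∈ B
      · have h1 : incCycle B y = τ y := by rw [← claim1, resP_apply_mem hy]
        rw [h1]
        have hτyB : τ y ∈ B := (hinvτ y).1 hy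
        have h2 : (resP σ B hinvσ)⁻¹ (τ y) = σ⁻¹ (τ y) := by
          apply (resP σ B hinvσ).injective
          rw [Equiv.Perm.apply_inv_self, resP_apply_mem ((hinvσ' (τ y)).2 hτyB),
            Equiv.Perm.apply_inv_self]
        rw [h2, resP_apply_mem hy, hρ, Equiv.Perm.mul_apply]
      · have h1 : incCycle B y = y := incCycle_apply_of_not_mem hy
        rw [h1]
        have h2 : (resP σ B hinvσ)⁻¹ y = y := by
          apply (resP σ B hinvσ).injective
          rw [Equiv.Perm.apply_inv_self, resP_apply_not_mem hy]
        rw [h2, resP_apply_not_mem hy]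
    have hsupp : ∀ y, resP σ B hinvσ y ≠ y → y ∈ B := by
      intro y hy
      by_contra h
      exact hy (resP_apply_not_mem h)
    have hmaster := master_mpr B.card B (resP σ B hinvσ) rfl hBne hsupp
      (resP_Inc hIσ) (resP_NCr hNσ)
    rw [claim2] at hmaster
    have e1 : myC (resP σ B hinvσ) + B.card = (Mins σ ∩ B).card + p := resP_myC
    have e2 : myC (resP ρ B hinvρ) + B.card = (Mins ρ ∩ B).card + p := resP_myC
    have hBcard : B.card ≤ p := by
      have := Finset.card_le_card (Finset.subset_univ B)
      rwa [Finset.card_univ, Fintype.card_fin] at this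
    omega
  have hsum := Finset.sum_congr rfl key
  rw [Finset.sum_add_distrib, Finset.sum_add_distrib, sum_inter_orbit τ (Mins σ),
    sum_inter_orbit τ (Mins ρ), Finset.sum_const, smul_eq_mul, mul_one] at hsum
  have hsum2 : ∑ m ∈ Mins τ, (orbitF τ m).card = p := by
    have h1 : ∀ m ∈ Mins τ, (orbitF τ m).card = ((univ : Finset (Fin p)) ∩ orbitF τ m).card :=
      fun m _ => by rw [Finset.univ_inter]
    rw [Finset.sum_congr rfl h1, sum_inter_orbit τ univ, Finset.card_univ, Fintype.card_fin]
  rw [hsum2] at hsum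
  have : (Mins σ).card = myC σ := rfl
  have : (Mins ρ).card = myC ρ := rfl
  have : (Mins τ).card = myC τ := rfl
  omega

end Restrict

section Final

variable {p : ℕ}

lemma myC_finRotate (hp : 1 ≤ p) : myC (finRotate p) = 1 := by
  have hall : ∀ x y : Fin p, (finRotate p).SameCycle x y := by
    rcases Nat.lt_or_ge p 2 with h2 | h2
    · have hp1 : p = 1 := by omega
      subst hp1
      intro x y
      have hxy : x = y := Subsingleton.elim x y
      rw [hxy]
    · intro x y
      have hc := isCycle_finRotate_of_le h2
      have hs := support_finRotate_of_le h2
      apply hc.sameCycle <;> rw [← Equiv.Perm.mem_support, hs] <;> exact mem_univ _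
  have hM : Mins (finRotate p) = {(⟨0, hp⟩ : Fin p)} := by
    ext z
    rw [mem_Mins, Finset.mem_singleton]
    constructor
    · intro h
      refine le_antisymm (h ⟨0, hp⟩ (hall z _)) ?_
      rw [Fin.le_def]
      exact Nat.zero_le _
    · rintro rfl y _
      rw [Fin.le_def]
      exact Nat.zero_le _
  rw [myC, hM, Finset.card_singleton]

lemma permLength_finRotate (hp : 1 ≤ p) : permLength (finRotate p) + 1 = p := by
  have := permLength_add_myC (finRotate p)
  rw [myC_finRotate hp] at this
  exact this

end Final

section Bridge

variable {n : ℕ}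

lemma orbitPartition_le_iff {σ τ : Equiv.Perm (Fin n)} :
    orbitPartition σ ≤ orbitPartition τ ↔
      ∀ x y : Fin n, σ.SameCycle x y → τ.SameCycle x y := by
  constructor
  · intro h x y hxy
    have hx : x ∈ (orbitPartition σ).part x :=
      Finpartition.mem_part_ofSetoid_iff_rel.2 (Equiv.Perm.SameCycle.refl σ x)
    obtain ⟨c, hc, hsub⟩ := h ((orbitPartition σ).part_mem.2 (mem_univ x))
    have hyc : y ∈ c := hsub (Finpartition.mem_part_ofSetoid_iff_rel (s := sameCycleSetoid σ).2 hxy)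
    have hxc : x ∈ c := hsub hx
    have hceq : (orbitPartition τ).part x = c := (orbitPartition τ).part_eq_of_mem hc hxc
    rw [← hceq] at hyc
    exact Finpartition.mem_part_ofSetoid_iff_rel.1 hyc
  · intro h b hb
    obtain ⟨x, hx⟩ := (orbitPartition σ).nonempty_of_mem_parts hb
    refine ⟨(orbitPartition τ).part x, (orbitPartition τ).part_mem.2 (mem_univ x), ?_⟩
    intro y hy
    have hbeq : (orbitPartition σ).part x = b := (orbitPartition σ).part_eq_of_mem hb hx
    rw [← hbeq] at hy
    exact Finpartition.mem_part_ofSetoid_iff_rel.2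
      (h x y (Finpartition.mem_part_ofSetoid_iff_rel.1 hy))

end Bridge

end NCGeo


open NCGeo

/-- For permutations `β₁, …, β_k ∈ S_p` (encoded as `β 1, …, β k` with `β 0 = id` and
`β (k+1) = γ`, the full cycle), the quantity
`L = |β₁| + |β₁⁻¹β₂| + ⋯ + |β_{k−1}⁻¹β_k| + |β_k⁻¹γ|` satisfies `L ≥ p − 1`, with equality
iff every `β_i` is geodesic (`|β_i| + |β_i⁻¹γ| = p − 1`) and the orbit partitions satisfy
`[β₁] ≤ [β₂] ≤ ⋯ ≤ [β_k]`. -/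
theorem geodesic_chain_characterization (p k : ℕ) (hk : 1 ≤ k)
    (β : ℕ → Equiv.Perm (Fin p)) (h0 : β 0 = 1) (hlast : β (k + 1) = finRotate p) :
    p - 1 ≤ (∑ i ∈ Finset.range (k + 1), permLength ((β i)⁻¹ * β (i + 1))) ∧
    ((∑ i ∈ Finset.range (k + 1), permLength ((β i)⁻¹ * β (i + 1))) = p - 1 ↔
      (∀ i ∈ Finset.Icc 1 k,
        permLength (β i) + permLength ((β i)⁻¹ * finRotate p) = p - 1) ∧
      (∀ i ∈ Finset.Ico 1 k, orbitPartition (β i) ≤ orbitPartition (β (i + 1)))) := by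
  classical
  rcases Nat.eq_zero_or_pos p with hp0 | hp
  · subst hp0
    have hone : ∀ γ : Equiv.Perm (Fin 0), γ = 1 := fun γ => Equiv.ext fun x => x.elim0
    have hL : ∀ i : ℕ, permLength ((β i)⁻¹ * β (i + 1)) = 0 := fun i => by
      rw [hone ((β i)⁻¹ * β (i + 1))]; exact NCGeo.permLength_one
    have hs : ∑ i ∈ Finset.range (k + 1), permLength ((β i)⁻¹ * β (i + 1)) = 0 :=
      Finset.sum_eq_zero fun i _ => hL i
    refine ⟨by omega, ?_, ?_⟩
    · intro _
      constructor
      · intro i _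
        have e1 : permLength (β i) = 0 := by
          rw [hone (β i)]; exact NCGeo.permLength_one
        have e2 : permLength ((β i)⁻¹ * finRotate 0) = 0 := by
          rw [hone ((β i)⁻¹ * finRotate 0)]; exact NCGeo.permLength_one
        omega
      · intro i _
        rw [hone (β i), hone (β (i + 1))]
    · intro _
      omega
  · -- p ≥ 1
    have hγlen : permLength (finRotate p) + 1 = p := permLength_finRotate hp
    have hpre : ∀ j, j ≤ k + 1 →
        permLength (β j) ≤ ∑ i ∈ Finset.range j, permLength ((β i)⁻¹ * β (i + 1)) := by
      intro j
      induction j with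
      | zero =>
        intro _
        rw [h0, NCGeo.permLength_one]
        exact Nat.zero_le _
      | succ n ih =>
        intro hn
        have h1 : β (n + 1) = β n * ((β n)⁻¹ * β (n + 1)) := by rw [mul_inv_cancel_left]
        have h2 : permLength (β (n + 1)) ≤
            permLength (β n) + permLength ((β n)⁻¹ * β (n + 1)) := by
          conv_lhs => rw [h1]
          exact permLength_mul_le _ _
        have h3 := ih (by omega)
        rw [Finset.sum_range_succ]
        omega
    have hsuf : ∀ d j, j + d = k + 1 → permLength ((β j)⁻¹ * finRotate p) ≤
        ∑ i ∈ Finset.Ico j (k + 1), permLength ((β i)⁻¹ * β (i + 1)) := by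
      intro d
      induction d with
      | zero =>
        intro j hj
        have hjk : j = k + 1 := by omega
        subst hjk
        rw [hlast, inv_mul_cancel, NCGeo.permLength_one]
        exact Nat.zero_le _
      | succ d ih =>
        intro j hj
        have hjk : j < k + 1 := by omega
        have h1 : (β j)⁻¹ * finRotate p =
            ((β j)⁻¹ * β (j + 1)) * ((β (j + 1))⁻¹ * finRotate p) := by
          rw [mul_assoc, mul_inv_cancel_left]
        have h2 : permLength ((β j)⁻¹ * finRotate p) ≤
            permLength ((β j)⁻¹ * β (j + 1)) + permLength ((β (j + 1))⁻¹ * finRotate p) := by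
          conv_lhs => rw [h1]
          exact permLength_mul_le _ _
        have h3 := ih (j + 1) (by omega)
        rw [Finset.sum_eq_sum_Ico_succ_bot hjk]
        omega
    have htot : permLength (finRotate p) ≤
        ∑ i ∈ Finset.range (k + 1), permLength ((β i)⁻¹ * β (i + 1)) := by
      have := hpre (k + 1) le_rfl
      rwa [hlast] at this
    refine ⟨by omega, ?_, ?_⟩
    · -- equality → conditions
      intro heq
      have hgeo : ∀ i, 1 ≤ i → i ≤ k →
          (permLength (β i) + permLength ((β i)⁻¹ * finRotate p) = p - 1 ∧
           permLength (β i) = ∑ m ∈ Finset.range i, permLength ((β m)⁻¹ * β (m + 1))) := by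
        intro i h1 h2
        have ha := hpre i (by omega)
        have hb := hsuf (k + 1 - i) i (by omega)
        have hsplit := Finset.sum_range_add_sum_Ico
          (fun m => permLength ((β m)⁻¹ * β (m + 1))) (show i ≤ k + 1 by omega)
        have hlow : p - 1 ≤ permLength (β i) + permLength ((β i)⁻¹ * finRotate p) := by
          have h3 : finRotate p = β i * ((β i)⁻¹ * finRotate p) := by
            rw [mul_inv_cancel_left]
          have h4 := permLength_mul_le (β i) ((β i)⁻¹ * finRotate p)
          rw [← h3] at h4
          omega
        constructor <;> omega
      constructor
      · intro i hi
        rw [Finset.mem_Icc] at hi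
        exact (hgeo i hi.1 hi.2).1
      · intro i hi
        rw [Finset.mem_Ico] at hi
        obtain ⟨l, hl1, hl2, hl3⟩ := exists_minimal_decomp ((β i)⁻¹ * β (i + 1))
        have h4 := (refines_of_tight l hl1 (β i)).2
        have hprod : β i * l.prod = β (i + 1) := by rw [hl2, mul_inv_cancel_left]
        have hPi := (hgeo i hi.1 (by omega)).2
        have hPi1 := (hgeo (i + 1) (by omega) (by omega)).2
        have hSi1 := Finset.sum_range_succ (fun m => permLength ((β m)⁻¹ * β (m + 1))) i
        have e1 := permLength_add_myC (β i)
        have e2 := permLength_add_myC (β (i + 1))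
        have hcnt : myC (β i) = myC (β i * l.prod) + l.length := by
          rw [hprod, hl3]
          omega
        have hmono := h4 hcnt
        rw [hprod] at hmono
        rw [orbitPartition_le_iff]
        exact hmono
    · -- conditions → equality
      rintro ⟨hgeo, hchain⟩
      have hgeoC : ∀ i, 1 ≤ i → i ≤ k →
          myC (β i) + myC ((β i)⁻¹ * finRotate p) = p + 1 := by
        intro i h1 h2
        have h3 := hgeo i (Finset.mem_Icc.2 ⟨h1, h2⟩)
        have e1 := permLength_add_myC (β i)
        have e2 := permLength_add_myC ((β i)⁻¹ * finRotate p)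
        omega
      have claim : ∀ j, 1 ≤ j → j ≤ k →
          (∑ i ∈ Finset.range j, permLength ((β i)⁻¹ * β (i + 1))) + myC (β j) = p := by
        intro j
        induction j with
        | zero => omega
        | succ n ih =>
          intro _ hnk
          rcases Nat.eq_zero_or_pos n with hn0 | hn1
          · subst hn0
            rw [Finset.sum_range_one]
            have hL0 : (β 0)⁻¹ * β 1 = β 1 := by rw [h0, inv_one, one_mul]
            rw [hL0]
            exact permLength_add_myC (β 1)
          · have hstep := geodesic_chain_step hp (σ := β n) (τ := β (n + 1))
              (hgeoC n hn1 (by omega)) (hgeoC (n + 1) (by omega) hnk)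
              (orbitPartition_le_iff.1 (hchain n (Finset.mem_Ico.2 ⟨hn1, by omega⟩)))
            have ihh := ih hn1 (by omega)
            have e3 := permLength_add_myC ((β n)⁻¹ * β (n + 1))
            rw [Finset.sum_range_succ]
            omega
      have hck := claim k hk le_rfl
      have hgk := hgeoC k hk le_rfl
      have e4 := permLength_add_myC ((β k)⁻¹ * finRotate p)
      have e5 := one_le_myC hp (β k)
      have hsplitk := Finset.sum_range_succ (fun m => permLength ((β m)⁻¹ * β (m + 1))) k
      have hLk : permLength ((β k)⁻¹ * β (k + 1)) = permLength ((β k)⁻¹ * finRotate p) := by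
        rw [hlast]
      omega
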